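/- arXiv:1912.11385 — 5 statements merged into one kernel-verified Lean document; each statement's English description precedes it below -/
import Mathlib

section
/- A finite simple graph G has a clique k-cover (a family of cliques covering every edge such that every vertex belongs to at most k cliques) if and only if G is the intersection graph of a hypergraph of rank at most k. -/
/-!
Both directions are hypergraph duality. Given a clique cover, represent each vertex by the set of
cliques containing it: two vertices share a clique iff they are adjacent, and the rank bound is
the `k`-cover condition. Conversely, given a representation `E`, each point `w` of the ground set
yields the clique of vertices whose edge contains `w`; these cliques cover every edge, and a
vertex `v` lies only in the cliques coming from points of `E v`.
-/

open SimpleGraph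

/-- A clique `k`-cover: a family of cliques covering every edge,
with every vertex in at most `k` cliques. -/
def CliqueKCover {V : Type} [Fintype V] [DecidableEq V] (G : SimpleGraph V) (k : ℕ)
    (𝒞 : Finset (Finset V)) : Prop :=
  (∀ C ∈ 𝒞, G.IsClique (C : Set V)) ∧
  (∀ u v : V, G.Adj u v → ∃ C ∈ 𝒞, u ∈ C ∧ v ∈ C) ∧
  (∀ v : V, (𝒞.filter (fun C => v ∈ C)).card ≤ k)

/-- A separating equivalent `k`-cover: a clique cover whose cliques can be colored
with `k` colors so that intersecting cliques get distinct colors, and such that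
every two distinct vertices are separated by some clique. -/
def SepEqCover {V : Type} [Fintype V] [DecidableEq V] (G : SimpleGraph V) (k : ℕ)
    (𝒞 : Finset (Finset V)) : Prop :=
  (∀ C ∈ 𝒞, G.IsClique (C : Set V)) ∧
  (∀ u v : V, G.Adj u v → ∃ C ∈ 𝒞, u ∈ C ∧ v ∈ C) ∧
  (∃ c : Finset V → ℕ, (∀ C ∈ 𝒞, c C < k) ∧
    ∀ C ∈ 𝒞, ∀ D ∈ 𝒞, C ≠ D → (C ∩ D).Nonempty → c C ≠ c D) ∧
  (∀ u v : V, u ≠ v → ∃ C ∈ 𝒞, (u ∈ C ∧ v ∉ C) ∨ (v ∈ C ∧ u ∉ C))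

open Finset

section
variable {V W : Type} {G : SimpleGraph V}

theorem adj_iff_of_isClique_of_covers [DecidableEq V] {𝒞 : Finset (Finset V)}
    (hclique : ∀ C ∈ 𝒞, G.IsClique (C : Set V)) (hcover : ∀ u v, G.Adj u v → ∃ C ∈ 𝒞, u ∈ C ∧ v ∈ C)
    (u v : V) : G.Adj u v ↔ u ≠ v ∧ ({C ∈ 𝒞 | u ∈ C} ∩ {C ∈ 𝒞 | v ∈ C}).Nonempty := by
  constructor
  · intro huv
    obtain ⟨C, hC, hu, hv⟩ := hcover u v huv
    exact ⟨huv.ne, C, by simp [hC, hu, hv]⟩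
  · rintro ⟨hne, C, hC⟩
    simp only [mem_inter, mem_filter] at hC
    exact hclique C hC.1.1 hC.1.2 hC.2.2 hne

def dualHypergraph [Fintype V] [DecidableEq W] (E : V → Finset W) (w : W) : Finset V := {x | w ∈ E x}

@[simp]
theorem mem_dualHypergraph [Fintype V] [DecidableEq W] {E : V → Finset W} {w : W} {x : V} :
    x ∈ dualHypergraph E w ↔ w ∈ E x := by
  simp [dualHypergraph]

theorem isClique_dualHypergraph [Fintype V] [DecidableEq W] {E : V → Finset W}
    (hadj : ∀ u v, G.Adj u v ↔ u ≠ v ∧ (E u ∩ E v).Nonempty) (w : W) :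
    G.IsClique (dualHypergraph E w : Set V) := by
  intro x hx y hy hxy
  simp only [mem_coe, mem_dualHypergraph] at hx hy
  exact (hadj x y).mpr ⟨hxy, w, mem_inter.mpr ⟨hx, hy⟩⟩

theorem card_filter_image_dualHypergraph_le [Fintype V] [DecidableEq V] [Fintype W]
    [DecidableEq W] (E : V → Finset W) (v : V) :
    #{C ∈ univ.image (dualHypergraph E) | v ∈ C} ≤ #(E v) :=
  calc #{C ∈ univ.image (dualHypergraph E) | v ∈ C}
      ≤ #((E v).image (dualHypergraph E)) := by
        refine card_le_card fun C hC => ?_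
        obtain ⟨hC, hv⟩ := mem_filter.mp hC
        obtain ⟨w, -, rfl⟩ := mem_image.mp hC
        exact mem_image_of_mem _ (mem_dualHypergraph.mp hv)
    _ ≤ #(E v) := card_image_le

theorem cliqueKCover_image_dualHypergraph [Fintype V] [DecidableEq V] [Fintype W] [DecidableEq W]
    {k : ℕ} {E : V → Finset W}
    (hk : ∀ x, #(E x) ≤ k) (hadj : ∀ u v, G.Adj u v ↔ u ≠ v ∧ (E u ∩ E v).Nonempty) :
    CliqueKCover G k (univ.image (dualHypergraph E)) := by
  refine ⟨?_, fun u v huv => ?_, fun v => (card_filter_image_dualHypergraph_le E v).trans (hk v)⟩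
  · simp only [mem_image, mem_univ, true_and, forall_exists_index, forall_apply_eq_imp_iff]
    exact isClique_dualHypergraph hadj
  · obtain ⟨-, w, hw⟩ := (hadj u v).mp huv
    obtain ⟨hu, hv⟩ := mem_inter.mp hw
    exact ⟨dualHypergraph E w, mem_image_of_mem _ (mem_univ w), by simpa, by simpa⟩

end

/-- A finite simple graph has a clique `k`-cover iff it is the intersection graph
of a hypergraph of rank at most `k`. -/
theorem stmt_0 {V : Type} [Fintype V] [DecidableEq V] (G : SimpleGraph V) (k : ℕ) :
    (∃ 𝒞 : Finset (Finset V), CliqueKCover G k 𝒞) ↔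
      ∃ (W : Type) (_ : Fintype W) (_ : DecidableEq W) (E : V → Finset W),
        (∀ x : V, (E x).card ≤ k) ∧
        (∀ u v : V, G.Adj u v ↔ u ≠ v ∧ (E u ∩ E v).Nonempty) := by
  constructor
  · rintro ⟨𝒞, hclique, hcover, hcard⟩
    exact ⟨Finset V, inferInstance, inferInstance, fun x => {C ∈ 𝒞 | x ∈ C}, hcard,
      adj_iff_of_isClique_of_covers hclique hcover⟩
  · rintro ⟨W, _, _, E, hk, hadj⟩
    exact ⟨_, cliqueKCover_image_dualHypergraph hk hadj⟩
end

section
/- Let G be a connected triangle-free finite simple graph with at least 3 vertices. Then dim_P(complement of G) equals the edge chromatic number χ'(G); consequently, G is a fractal (dim_R(G) < dim_P(Ḡ)) if and only if G is of class 2 (χ'(G) = Δ(G)+1). -/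
open SimpleGraph

/-- A proper edge coloring of `G` with colors `< k`. -/
def EdgeKColorable {V : Type} (G : SimpleGraph V) (k : ℕ) : Prop :=
  ∃ c : Sym2 V → ℕ, (∀ e ∈ G.edgeSet, c e < k) ∧
    ∀ e ∈ G.edgeSet, ∀ e' ∈ G.edgeSet, e ≠ e' → (∃ v : V, v ∈ e ∧ v ∈ e') → c e ≠ c e'

/-!
In a triangle-free graph the only clique containing an edge is the edge itself, so every clique
cover contains all edges as two-element cliques, and colouring each edge by the colour of its
clique turns a separating equivalent `k`-cover into a proper edge colouring with `k` colours.
Conversely, the edges of a connected graph on at least three vertices separate its vertices, so a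
proper `k`-edge-colouring is a separating equivalent `k`-cover. Hence `dim_P(Ḡ) = χ'(G)`;
likewise `dim_R(G) = Δ(G)`, and the fractal criterion reduces to Vizing's bound `χ'(G) ≤ Δ(G) + 1`.

Vizing's bound is the Misra–Gries argument: an uncoloured edge `x y₀` gets a colour by rotating a
maximal fan at `x`, after swapping the colours `α`, `β` on one component of the `α`/`β` Kempe
graph when the colour `β` missing at the end of the fan is used at `x`.
-/

lemma Sym2.mk_ne_mk_of_ne_of_ne {α : Type*} {u v x y : α} (hx : u ≠ x) (hy : u ≠ y) :
    s(u, v) ≠ s(x, y) := fun h => by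
  rcases Sym2.mem_iff.mp (h ▸ Sym2.mem_mk_left u v) with rfl | rfl <;> contradiction

lemma Sym2.toFinset_injective {α : Type*} [DecidableEq α] :
    Function.Injective (Sym2.toFinset : Sym2 α → Finset α) :=
  fun _ _ h => Sym2.ext fun x => by rw [← Sym2.mem_toFinset, h, Sym2.mem_toFinset]

namespace SimpleGraph

variable {V : Type}

lemma Walk.IsPath.eq_of_subsingleton_neighborSet {H : SimpleGraph V}
    (hdeg : ∀ v u, H.Adj v u → (H.neighborSet v \ {u}).Subsingleton)
    {d b c e : V} {p : H.Walk d b} {q : H.Walk d c} (hp : p.IsPath) (hq : q.IsPath)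
    (hb : (H.neighborSet b).Subsingleton) (hc : (H.neighborSet c).Subsingleton)
    (he : H.Adj e d) (hep : e ∉ p.support) (heq : e ∉ q.support) : b = c := by
  induction p generalizing e with
  | nil =>
    cases q with
    | nil => rfl
    | cons h q =>
      cases hb he.symm h
      exact absurd (List.mem_cons_of_mem _ q.start_mem_support) heq
  | cons h p ih =>
    cases q with
    | nil =>
      cases hc he.symm h
      exact absurd (List.mem_cons_of_mem _ p.start_mem_support) hep
    | cons h' q =>
      rw [Walk.cons_isPath_iff] at hp hq
      have h₁ : _ ≠ e := fun h₁ => hep (h₁ ▸ List.mem_cons_of_mem _ p.start_mem_support)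
      have h₂ : _ ≠ e := fun h₂ => heq (h₂ ▸ List.mem_cons_of_mem _ q.start_mem_support)
      cases hdeg _ _ he.symm ⟨h, h₁⟩ ⟨h', h₂⟩
      exact ih hp.1 hq.1 hb h hp.2 hq.2

theorem Reachable.not_reachable_of_subsingleton_neighborSet {H : SimpleGraph V}
    (hdeg : ∀ v u, H.Adj v u → (H.neighborSet v \ {u}).Subsingleton) {a b c : V}
    (ha : (H.neighborSet a).Subsingleton) (hb : (H.neighborSet b).Subsingleton)
    (hc : (H.neighborSet c).Subsingleton) (hab : a ≠ b) (hac : a ≠ c) (hbc : b ≠ c)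
    (hab' : H.Reachable a b) : ¬ H.Reachable a c := by
  rintro hac'
  obtain ⟨p, hp⟩ := hab'.exists_isPath
  obtain ⟨q, hq⟩ := hac'.exists_isPath
  cases p with
  | nil => exact hab rfl
  | cons h p =>
    cases q with
    | nil => exact hac rfl
    | cons h' q =>
      cases ha h h'
      rw [Walk.cons_isPath_iff] at hp hq
      exact hbc (hp.1.eq_of_subsingleton_neighborSet hdeg hq.1 hb hc h hp.2 hq.2)

structure PartialEdgeColoring (G : SimpleGraph V) (n : ℕ) where
  color : V → V → Option ℕ
  symm : ∀ u v, color u v = color v u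
  adj : ∀ {u v k}, color u v = some k → G.Adj u v
  lt : ∀ {u v k}, color u v = some k → k < n
  injective : ∀ {u v w k}, color u v = some k → color u w = some k → v = w

namespace PartialEdgeColoring

variable {G : SimpleGraph V} {n : ℕ}

def Missing (p : PartialEdgeColoring G n) (v : V) (c : ℕ) : Prop :=
  ∀ u, p.color v u ≠ some c

def domain (p : PartialEdgeColoring G n) : Set (V × V) :=
  {e | (p.color e.1 e.2).isSome}

def empty : PartialEdgeColoring G n where
  color _ _ := none
  symm _ _ := rfl
  adj h := nomatch h
  lt h := nomatch h
  injective h := nomatch h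

lemma exists_missing [Fintype V] [DecidableRel G.Adj] (p : PartialEdgeColoring G n) {v : V}
    (hv : G.degree v < n) : ∃ c < n, p.Missing v c := by
  let used := (G.neighborFinset v).image fun u => (p.color v u).getD n
  have hcard : used.card < (Finset.range n).card := by
    rw [Finset.card_range]
    exact Finset.card_image_le.trans_lt (by rwa [card_neighborFinset_eq_degree])
  obtain ⟨c, hc, hcu⟩ := Finset.exists_mem_notMem_of_card_lt_card hcard
  refine ⟨c, Finset.mem_range.mp hc, fun u hu => hcu ?_⟩
  exact Finset.mem_image.mpr ⟨u, (G.mem_neighborFinset v u).mpr (p.adj hu), by rw [hu]; rfl⟩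

section setColor

lemma missing_of_sym2_eq (p : PartialEdgeColoring G n) {x y : V} {c : ℕ} (hx : p.Missing x c)
    (hy : p.Missing y c) {u v : V} (h : s(u, v) = s(x, y)) : p.Missing u c := by
  rcases Sym2.mem_iff.mp (h ▸ Sym2.mem_mk_left u v) with rfl | rfl <;> assumption

variable [DecidableEq V] (p : PartialEdgeColoring G n) {x y : V} {c : ℕ}

def setColor (hxy : G.Adj x y) (hc : c < n) (hx : p.Missing x c) (hy : p.Missing y c) :
    PartialEdgeColoring G n where
  color u v := if s(u, v) = s(x, y) then some c else p.color u v
  symm u v := by rw [Sym2.eq_swap, p.symm]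
  adj {u v k} h := by
    split_ifs at h with he
    · exact G.mem_edgeSet.mp (he ▸ G.mem_edgeSet.mpr hxy)
    · exact p.adj h
  lt {u v k} h := by
    split_ifs at h with he
    · exact Option.some_inj.mp h ▸ hc
    · exact p.lt h
  injective {u v w k} h₁ h₂ := by
    split_ifs at h₁ h₂ with he₁ he₂ he₂
    · exact Sym2.congr_right.mp (he₁.trans he₂.symm)
    · exact absurd (Option.some_inj.mp h₁ ▸ h₂) (p.missing_of_sym2_eq hx hy he₁ w)
    · exact absurd (Option.some_inj.mp h₂ ▸ h₁) (p.missing_of_sym2_eq hx hy he₂ v)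
    · exact p.injective h₁ h₂

variable (hxy : G.Adj x y) (hc : c < n) (hx : p.Missing x c) (hy : p.Missing y c)

lemma color_setColor_of_eq {u v : V} (h : s(u, v) = s(x, y)) :
    (p.setColor hxy hc hx hy).color u v = some c := by
  simp only [setColor]; exact if_pos h

lemma color_setColor_of_ne {u v : V} (h : s(u, v) ≠ s(x, y)) :
    (p.setColor hxy hc hx hy).color u v = p.color u v := by
  simp only [setColor]; exact if_neg h

lemma domain_subset_setColor : p.domain ⊆ (p.setColor hxy hc hx hy).domain := by
  intro ⟨u, v⟩ huv
  by_cases h : s(u, v) = s(x, y)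
  · simp [domain, color_setColor_of_eq p hxy hc hx hy h]
  · simpa [domain, color_setColor_of_ne p hxy hc hx hy h] using huv

lemma missing_setColor {v : V} {d : ℕ} (hvx : v ≠ x) (hvy : v ≠ y) (h : p.Missing v d) :
    (p.setColor hxy hc hx hy).Missing v d := fun w => by
  rw [color_setColor_of_ne _ _ _ _ _ (Sym2.mk_ne_mk_of_ne_of_ne hvx hvy)]
  exact h w

end setColor

section kempe

variable (p : PartialEdgeColoring G n) (α β : ℕ)

def kempeGraph : SimpleGraph V where
  Adj u v := p.color u v = some α ∨ p.color u v = some β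
  symm := ⟨fun u v h => by rwa [p.symm v u]⟩
  loopless := ⟨fun u h => by rcases h with h | h <;> exact G.loopless.irrefl u (p.adj h)⟩

lemma subsingleton_neighborSet_kempeGraph {v : V} (h : p.Missing v α ∨ p.Missing v β) :
    ((p.kempeGraph α β).neighborSet v).Subsingleton := by
  intro w₁ hw₁ w₂ hw₂
  rcases h with h | h <;> rcases hw₁ with hw₁ | hw₁ <;> rcases hw₂ with hw₂ | hw₂ <;>
    first | exact p.injective hw₁ hw₂ | exact absurd hw₁ (h _) | exact absurd hw₂ (h _)

lemma subsingleton_neighborSet_kempeGraph_diff {v u : V} (hu : (p.kempeGraph α β).Adj v u) :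
    ((p.kempeGraph α β).neighborSet v \ {u}).Subsingleton := by
  rintro w₁ ⟨hw₁, hne₁⟩ w₂ ⟨hw₂, hne₂⟩
  rcases hu with hu | hu <;> rcases hw₁ with hw₁ | hw₁ <;> rcases hw₂ with hw₂ | hw₂ <;>
    first
    | exact p.injective hw₁ hw₂
    | exact absurd (p.injective hw₁ hu) hne₁
    | exact absurd (p.injective hw₂ hu) hne₂

variable {α β}

lemma map_swap_color_of_not_adj {u v : V} (h : ¬ (p.kempeGraph α β).Adj u v) :
    (p.color u v).map (Equiv.swap α β) = p.color u v := by
  cases hc : p.color u v with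
  | none => rfl
  | some c =>
    rw [Option.map_some, Equiv.swap_apply_of_ne_of_ne]
    · rintro rfl; exact h (Or.inl hc)
    · rintro rfl; exact h (Or.inr hc)

open Classical in
noncomputable def swapComponent (hα : α < n) (hβ : β < n) (s : V) : PartialEdgeColoring G n where
  color u v := if (p.kempeGraph α β).Reachable s u then (p.color u v).map (Equiv.swap α β)
    else p.color u v
  symm u v := by
    have hclosed : ∀ {u v}, (p.kempeGraph α β).Reachable s u →
        ¬ (p.kempeGraph α β).Reachable s v →
        (p.color u v).map (Equiv.swap α β) = p.color v u := fun hu hv => by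
      rw [p.map_swap_color_of_not_adj fun h => hv (hu.trans h.reachable), p.symm]
    by_cases hu : (p.kempeGraph α β).Reachable s u <;>
      by_cases hv : (p.kempeGraph α β).Reachable s v <;> simp only [hu, hv, if_true, if_false]
    · rw [p.symm]
    · exact hclosed hu hv
    · exact (hclosed hv hu).symm
    · exact p.symm u v
  adj {u v k} h := by
    split_ifs at h
    · obtain ⟨k', hk', -⟩ := Option.map_eq_some_iff.mp h
      exact p.adj hk'
    · exact p.adj h
  lt {u v k} h := by
    split_ifs at h
    · obtain ⟨k', hk', rfl⟩ := Option.map_eq_some_iff.mp h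
      rw [Equiv.swap_apply_def]
      split_ifs
      exacts [hβ, hα, p.lt hk']
    · exact p.lt h
  injective {u v w k} h₁ h₂ := by
    split_ifs at h₁ h₂
    · obtain ⟨k', hk', -⟩ := Option.map_eq_some_iff.mp h₁
      have := Option.map_injective (Equiv.injective _) (h₁.trans h₂.symm)
      exact p.injective hk' (this ▸ hk')
    · exact p.injective h₁ h₂

variable (hα : α < n) (hβ : β < n) {s : V}

lemma color_swapComponent_of_not_reachable {u : V} (hu : ¬ (p.kempeGraph α β).Reachable s u)
    (v : V) : (p.swapComponent hα hβ s).color u v = p.color u v := by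
  simp only [swapComponent]; exact if_neg hu

lemma domain_swapComponent : (p.swapComponent hα hβ s).domain = p.domain := by
  ext ⟨u, v⟩
  by_cases hu : (p.kempeGraph α β).Reachable s u
  · simp [domain, swapComponent, hu]
  · simp [domain, color_swapComponent_of_not_reachable p hα hβ hu]

lemma missing_swapComponent_of_not_reachable {u : V} {c : ℕ}
    (hu : ¬ (p.kempeGraph α β).Reachable s u) (h : p.Missing u c) :
    (p.swapComponent hα hβ s).Missing u c := fun v => by
  rw [color_swapComponent_of_not_reachable p hα hβ hu]; exact h v

lemma missing_swapComponent {u : V} {c : ℕ} (h : p.Missing u c) (hcα : c ≠ α) (hcβ : c ≠ β) :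
    (p.swapComponent hα hβ s).Missing u c := by
  by_cases hu : (p.kempeGraph α β).Reachable s u
  · intro v hv
    simp only [swapComponent, if_pos hu, Option.map_eq_some_iff] at hv
    obtain ⟨c', hc', hswap⟩ := hv
    rw [Equiv.swap_apply_eq_iff, Equiv.swap_apply_of_ne_of_ne hcα hcβ] at hswap
    exact h v (hswap ▸ hc')
  · exact p.missing_swapComponent_of_not_reachable hα hβ hu h

lemma missing_swapComponent_self (h : p.Missing s β) : (p.swapComponent hα hβ s).Missing s α := by
  intro v hv
  simp only [swapComponent, if_pos (Reachable.refl s), Option.map_eq_some_iff] at hv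
  obtain ⟨c', hc', hswap⟩ := hv
  rw [Equiv.swap_apply_eq_iff, Equiv.swap_apply_left] at hswap
  exact h v (hswap ▸ hc')

end kempe

structure IsFan (p : PartialEdgeColoring G n) (x : V) (k : ℕ) (y : ℕ → V) (b : ℕ → ℕ) : Prop where
  adj : ∀ i ≤ k, G.Adj x (y i)
  injOn : ∀ i ≤ k, ∀ j ≤ k, y i = y j → i = j
  color_succ : ∀ i < k, p.color x (y (i + 1)) = some (b i)
  missing : ∀ i < k, p.Missing (y i) (b i)

namespace IsFan

variable {p : PartialEdgeColoring G n} {x : V} {k : ℕ} {y : ℕ → V} {b : ℕ → ℕ}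

lemma mono (hf : p.IsFan x k y b) {j : ℕ} (hj : j ≤ k) : p.IsFan x j y b where
  adj i hi := hf.adj i (hi.trans hj)
  injOn i hi i' hi' := hf.injOn i (hi.trans hj) i' (hi'.trans hj)
  color_succ i hi := hf.color_succ i (hi.trans_le hj)
  missing i hi := hf.missing i (hi.trans_le hj)

lemma ne_center (hf : p.IsFan x k y b) {i : ℕ} (hi : i ≤ k) : y i ≠ x :=
  (hf.adj i hi).ne'

lemma ne_of_missing (hf : p.IsFan x k y b) {c : ℕ} (hc : p.Missing x c) {i : ℕ} (hi : i < k) :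
    b i ≠ c :=
  fun h => hc _ (h ▸ hf.color_succ i hi)

lemma injOn_colors (hf : p.IsFan x k y b) {i j : ℕ} (hi : i < k) (hj : j < k) (h : b i = b j) :
    i = j := by
  have := p.injective (hf.color_succ i hi) (h ▸ hf.color_succ j hj)
  have := hf.injOn _ hi _ hj this
  omega

lemma length_lt_card [Fintype V] (hf : p.IsFan x k y b) : k < Fintype.card V := by
  have hinj : Function.Injective fun i : Fin (k + 1) => y i :=
    fun i j h => Fin.ext (hf.injOn i (Nat.lt_succ_iff.mp i.2) j (Nat.lt_succ_iff.mp j.2) h)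
  simpa using Fintype.card_le_of_injective _ hinj

/-- Recolouring the last edge `x (y k)` with `γ` frees its old colour `b (k - 1)` at `x`, so the
shorter fan can be rotated with `b (k - 1)` in place of `γ`. -/
theorem rotate [DecidableEq V] (hf : p.IsFan x k y b) {γ : ℕ} (hγ : γ < n) (hx : p.Missing x γ)
    (hk : p.Missing (y k) γ) :
    ∃ q : PartialEdgeColoring G n, (x, y 0) ∈ q.domain ∧ p.domain ⊆ q.domain := by
  induction k generalizing p γ with
  | zero =>
    refine ⟨p.setColor (hf.adj 0 le_rfl) hγ hx hk, ?_, p.domain_subset_setColor _ _ _ _⟩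
    simp [domain, color_setColor_of_eq]
  | succ k ih =>
    let p' := p.setColor (hf.adj _ le_rfl) hγ hx hk
    have hne : ∀ i ≤ k, y i ≠ x ∧ y i ≠ y (k + 1) := fun i hi =>
      ⟨hf.ne_center (by omega), fun h => by have := hf.injOn i (by omega) _ le_rfl h; omega⟩
    have hf' : p'.IsFan x k y b :=
      { adj := (hf.mono k.le_succ).adj
        injOn := (hf.mono k.le_succ).injOn
        color_succ := fun i hi => by
          rw [p'.symm, color_setColor_of_ne _ _ _ _ _
            (Sym2.mk_ne_mk_of_ne_of_ne (hne _ (by omega)).1 (hne _ (by omega)).2), p.symm]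
          exact hf.color_succ i (by omega)
        missing := fun i hi => p.missing_setColor _ _ _ _ (hne i hi.le).1 (hne i hi.le).2
          (hf.missing i (by omega)) }
    have hbk : p'.Missing x (b k) := by
      intro w hw
      by_cases hs : s(x, w) = s(x, y (k + 1))
      · rw [color_setColor_of_eq _ _ _ _ _ hs] at hw
        exact hf.ne_of_missing hx k.lt_succ_self (Option.some_inj.mp hw).symm
      · rw [color_setColor_of_ne _ _ _ _ _ hs] at hw
        exact hs (congrArg _ (p.injective hw (hf.color_succ k k.lt_succ_self)))
    obtain ⟨q, hq, hpq⟩ := ih hf' (p.lt (hf.color_succ k k.lt_succ_self)) hbk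
      (p.missing_setColor _ _ _ _ (hne k le_rfl).1 (hne k le_rfl).2 (hf.missing k k.lt_succ_self))
    exact ⟨q, hq, (p.domain_subset_setColor _ _ _ _).trans hpq⟩

lemma snoc {m : V → ℕ} (hf : p.IsFan x k y (m ∘ y)) (hm : ∀ v, p.Missing v (m v)) {z : V}
    (hz : p.color x z = some (m (y k))) (hzy : ∀ i ≤ k, y i ≠ z) :
    p.IsFan x (k + 1) (Function.update y (k + 1) z) (m ∘ Function.update y (k + 1) z) := by
  have hy : ∀ i ≤ k, Function.update y (k + 1) z i = y i := fun i hi =>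
    Function.update_of_ne (by omega) _ _
  have hz' : Function.update y (k + 1) z (k + 1) = z := Function.update_self _ _ _
  refine ⟨fun i hi => ?_, fun i hi j hj hij => ?_, fun i hi => ?_, fun i _ => hm _⟩
  · rcases Nat.lt_or_eq_of_le hi with hi | rfl
    · rw [hy i (by omega)]; exact hf.adj i (by omega)
    · rw [hz']; exact p.adj hz
  · rcases Nat.lt_or_eq_of_le hi with hi | rfl <;> rcases Nat.lt_or_eq_of_le hj with hj | rfl
    · rw [hy i (by omega), hy j (by omega)] at hij; exact hf.injOn i (by omega) j (by omega) hij
    · rw [hy i (by omega), hz'] at hij; exact absurd hij (hzy i (by omega))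
    · rw [hy j (by omega), hz'] at hij; exact absurd hij.symm (hzy j (by omega))
    · rfl
  · simp only [Function.comp_apply, hy i (by omega)]
    rcases Nat.lt_or_eq_of_le (Nat.lt_succ_iff.mp hi) with hi | rfl
    · rw [hy (i + 1) (by omega)]; exact hf.color_succ i hi
    · rw [hz']; exact hz

theorem rotate_of_swapComponent [DecidableEq V] (hf : p.IsFan x k y b) {α β : ℕ} (hα : α < n)
    (hβ : β < n) (hxα : p.Missing x α) (hkβ : p.Missing (y k) β)
    (hkx : ¬ (p.kempeGraph α β).Reachable (y k) x)
    (hki : ∀ i < k, b i = β → ¬ (p.kempeGraph α β).Reachable (y k) (y i)) :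
    ∃ q : PartialEdgeColoring G n, (x, y 0) ∈ q.domain ∧ p.domain ⊆ q.domain := by
  let p' := p.swapComponent hα hβ (y k)
  have hf' : p'.IsFan x k y b :=
    { adj := hf.adj
      injOn := hf.injOn
      color_succ := fun i hi => by
        rw [color_swapComponent_of_not_reachable p hα hβ hkx]; exact hf.color_succ i hi
      missing := fun i hi => by
        by_cases hbi : b i = β
        · exact p.missing_swapComponent_of_not_reachable hα hβ (hki i hi hbi) (hf.missing i hi)
        · exact p.missing_swapComponent hα hβ (hf.missing i hi) (hf.ne_of_missing hxα hi) hbi }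
  obtain ⟨q, hq, hpq⟩ := hf'.rotate hα (p.missing_swapComponent_of_not_reachable hα hβ hkx hxα)
    (p.missing_swapComponent_self hα hβ hkβ)
  exact ⟨q, hq, (domain_swapComponent p hα hβ).symm.subset.trans hpq⟩

end IsFan

lemma exists_maximal_isFan [Fintype V] (p : PartialEdgeColoring G n) {m : V → ℕ}
    (hm : ∀ v, p.Missing v (m v)) {x y₀ : V} (h : G.Adj x y₀) :
    ∃ k y, y 0 = y₀ ∧ p.IsFan x k y (m ∘ y) ∧
      ∀ z, p.color x z = some (m (y k)) → ∃ i ≤ k, y i = z := by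
  by_contra! hext
  have hfans : ∀ k, ∃ y, y 0 = y₀ ∧ p.IsFan x k y (m ∘ y) := by
    intro k
    induction k with
    | zero =>
      exact ⟨fun _ => y₀, rfl, fun _ _ => h, fun _ _ _ _ _ => by omega, fun _ h => by omega,
        fun _ h => by omega⟩
    | succ k ih =>
      obtain ⟨y, hy₀, hf⟩ := ih
      obtain ⟨z, hz, hzy⟩ := hext k y hy₀ hf
      exact ⟨_, by rwa [Function.update_of_ne (by omega)], hf.snoc hm hz hzy⟩
  obtain ⟨y, -, hf⟩ := hfans (Fintype.card V)
  exact hf.length_lt_card.false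

theorem exists_extend [Fintype V] [DecidableEq V] [DecidableRel G.Adj]
    (hdeg : ∀ v, G.degree v < n) (p : PartialEdgeColoring G n) {x y₀ : V} (h : G.Adj x y₀) :
    ∃ q : PartialEdgeColoring G n, (x, y₀) ∈ q.domain ∧ p.domain ⊆ q.domain := by
  by_cases h₀ : (x, y₀) ∈ p.domain
  · exact ⟨p, h₀, subset_rfl⟩
  choose m hmn hm using fun v => p.exists_missing (hdeg v)
  obtain ⟨k, y, rfl, hf, hmax⟩ := p.exists_maximal_isFan hm h
  set α := m x
  set β := m (y k)
  by_cases hxβ : p.Missing x β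
  · exact hf.rotate (hmn _) hxβ (hm _)
  obtain ⟨z, hz⟩ : ∃ z, p.color x z = some β := by simpa [Missing] using hxβ
  obtain ⟨_ | j, hj, rfl⟩ := hmax z hz
  · exact absurd (by simp [domain, hz]) h₀
  have hjβ : m (y j) = β := Option.some_inj.mp ((hf.color_succ j hj).symm.trans hz)
  let K := p.kempeGraph α β
  -- `x`, `y j` and `y k` each have at most one neighbour in the Kempe graph of maximum degree 2,
  -- so they cannot all lie in one component.
  have hends : ¬ (K.Reachable (y j) x ∧ K.Reachable (y k) x) := by
    rintro ⟨hjx, hkx⟩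
    refine Reachable.not_reachable_of_subsingleton_neighborSet
      (fun v u => p.subsingleton_neighborSet_kempeGraph_diff α β)
      (p.subsingleton_neighborSet_kempeGraph α β (.inl (hm x)))
      (p.subsingleton_neighborSet_kempeGraph α β (.inr (hjβ ▸ hm (y j))))
      (p.subsingleton_neighborSet_kempeGraph α β (.inr (hm (y k))))
      (hf.ne_center (by omega)).symm (hf.ne_center le_rfl).symm
      (fun h => by have := hf.injOn j (by omega) k le_rfl h; omega) hjx.symm hkx.symm
  by_cases hjx : K.Reachable (y j) x
  · refine hf.rotate_of_swapComponent (hmn _) (hmn _) (hm x) (hm _) (fun hkx => hends ⟨hjx, hkx⟩)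
      fun i hi hiβ hki => hends ⟨hjx, hki.trans ?_⟩
    rwa [hf.injOn_colors hi (by omega) (hiβ.trans hjβ.symm)]
  · refine (hf.mono (by omega)).rotate_of_swapComponent (hmn _) (hmn _) (hm x)
      (show p.Missing (y j) β from hjβ ▸ hm (y j)) hjx
      fun i hi hiβ => absurd (hf.injOn_colors (by omega) (by omega) (hiβ.trans hjβ.symm)) (by omega)

theorem exists_forall_adj_mem_domain [Fintype V] [DecidableEq V] [DecidableRel G.Adj]
    (hdeg : ∀ v, G.degree v < n) :
    ∃ p : PartialEdgeColoring G n, ∀ u v, G.Adj u v → (u, v) ∈ p.domain := by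
  suffices ∀ s : Finset (V × V), ∃ p : PartialEdgeColoring G n,
      ∀ e ∈ s, G.Adj e.1 e.2 → e ∈ p.domain by
    obtain ⟨p, hp⟩ := this Finset.univ
    exact ⟨p, fun u v h => hp (u, v) (Finset.mem_univ _) h⟩
  intro s
  induction s using Finset.induction_on with
  | empty => exact ⟨empty, by simp⟩
  | insert e s _ ih =>
    obtain ⟨p, hp⟩ := ih
    by_cases he : G.Adj e.1 e.2
    · obtain ⟨q, hq, hpq⟩ := exists_extend hdeg p he
      refine ⟨q, fun e' he' hadj => ?_⟩
      rcases Finset.mem_insert.mp he' with rfl | he'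
      exacts [hq, hpq (hp e' he' hadj)]
    · refine ⟨p, fun e' he' hadj => ?_⟩
      rcases Finset.mem_insert.mp he' with rfl | he'
      exacts [absurd hadj he, hp e' he' hadj]

lemma edgeKColorable_of_forall_adj_mem_domain (p : PartialEdgeColoring G n)
    (hp : ∀ u v, G.Adj u v → (u, v) ∈ p.domain) : EdgeKColorable G n := by
  have hsome : ∀ {u v}, G.Adj u v → ∃ c, p.color u v = some c := fun h =>
    Option.isSome_iff_exists.mp (hp _ _ h)
  refine ⟨Sym2.lift ⟨fun u v => (p.color u v).getD 0, fun u v => by simp only [p.symm u v]⟩,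
    ?_, ?_⟩
  · intro e he
    induction e using Sym2.ind with
    | _ u v =>
      obtain ⟨c, hc⟩ := hsome (G.mem_edgeSet.mp he)
      simpa [hc] using p.lt hc
  · rintro e he e' he' hne ⟨v, hv, hv'⟩ hcc
    obtain ⟨a, rfl⟩ := Sym2.mem_iff_exists.mp hv
    obtain ⟨a', rfl⟩ := Sym2.mem_iff_exists.mp hv'
    obtain ⟨c, hc⟩ := hsome (G.mem_edgeSet.mp he)
    obtain ⟨c', hc'⟩ := hsome (G.mem_edgeSet.mp he')
    simp only [Sym2.lift_mk, hc, hc', Option.getD_some] at hcc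
    exact hne (by rw [p.injective hc (hcc ▸ hc')])

end PartialEdgeColoring

theorem edgeKColorable_maxDegree_succ [Fintype V] [DecidableEq V] (G : SimpleGraph V)
    [DecidableRel G.Adj] : EdgeKColorable G (G.maxDegree + 1) := by
  obtain ⟨p, hp⟩ := PartialEdgeColoring.exists_forall_adj_mem_domain (G := G)
    fun v => Nat.lt_succ_of_le (G.degree_le_maxDegree v)
  exact p.edgeKColorable_of_forall_adj_mem_domain hp

theorem maxDegree_le_of_edgeKColorable [Fintype V] [DecidableEq V] {G : SimpleGraph V}
    [DecidableRel G.Adj] {k : ℕ} (h : EdgeKColorable G k) : G.maxDegree ≤ k := by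
  obtain ⟨c, hlt, hc⟩ := h
  refine G.maxDegree_le_of_forall_degree_le _ fun v => ?_
  rw [← card_incidenceFinset_eq_degree, ← Finset.card_range k]
  refine Finset.card_le_card_of_injOn c (fun e he => ?_) fun e he e' he' hee' => ?_
  · exact Finset.mem_range.mpr (hlt e ((G.mem_incidenceFinset v e).mp he).1)
  · by_contra hne
    have he := (G.mem_incidenceFinset v e).mp he
    have he' := (G.mem_incidenceFinset v e').mp he'
    exact hc e he.1 e' he'.1 hne ⟨v, he.2, he'.2⟩ hee'

lemma IsClique.card_le_two {G : SimpleGraph V} (htf : G.CliqueFree 3) {C : Finset V}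
    (hC : G.IsClique (C : Set V)) : C.card ≤ 2 := by
  by_contra! h
  exact htf.mono h C ⟨hC, rfl⟩

lemma toFinset_mem_of_isClique_cover [DecidableEq V] {G : SimpleGraph V} (htf : G.CliqueFree 3)
    {𝒞 : Finset (Finset V)} (hcl : ∀ C ∈ 𝒞, G.IsClique (C : Set V))
    (hcov : ∀ u v, G.Adj u v → ∃ C ∈ 𝒞, u ∈ C ∧ v ∈ C)
    {e : Sym2 V} (he : e ∈ G.edgeSet) : e.toFinset ∈ 𝒞 := by
  induction e using Sym2.ind with
  | _ u v =>
    obtain ⟨C, hC, huC, hvC⟩ := hcov u v (G.mem_edgeSet.mp he)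
    have hsub : ({u, v} : Finset V) ⊆ C :=
      Finset.insert_subset huC (Finset.singleton_subset_iff.mpr hvC)
    have hcard : C.card ≤ ({u, v} : Finset V).card := by
      rw [Finset.card_pair (G.mem_edgeSet.mp he).ne]; exact (hcl C hC).card_le_two htf
    rwa [Sym2.toFinset_mk_eq, Finset.eq_of_subset_of_card_le hsub hcard]

lemma edgeKColorable_of_sepEqCover [Fintype V] [DecidableEq V] {G : SimpleGraph V}
    (htf : G.CliqueFree 3) {k : ℕ} {𝒞 : Finset (Finset V)}
    (h : SepEqCover G k 𝒞) : EdgeKColorable G k := by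
  obtain ⟨hcl, hcov, ⟨c, hlt, hc⟩, -⟩ := h
  have hmem := fun {e} (he : e ∈ G.edgeSet) => toFinset_mem_of_isClique_cover htf hcl hcov he
  refine ⟨fun e => c e.toFinset, fun e he => hlt _ (hmem he), ?_⟩
  rintro e he e' he' hne ⟨v, hv, hv'⟩
  exact hc _ (hmem he) _ (hmem he') (Sym2.toFinset_injective.ne hne)
    ⟨v, Finset.mem_inter.mpr ⟨Sym2.mem_toFinset.mpr hv, Sym2.mem_toFinset.mpr hv'⟩⟩

lemma isClique_toFinset [DecidableEq V] {G : SimpleGraph V} {e : Sym2 V} (he : e ∈ G.edgeSet) :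
    G.IsClique (e.toFinset : Set V) := by
  induction e using Sym2.ind with
  | _ u v => simpa [Sym2.toFinset_mk_eq, isClique_pair] using fun _ => G.mem_edgeSet.mp he

lemma exists_adj_separating [Fintype V] [DecidableEq V] {G : SimpleGraph V}
    (hconn : G.Connected) (hcard : 3 ≤ Fintype.card V) (u v : V) :
    ∃ w, G.Adj u w ∧ w ≠ v ∨ G.Adj v w ∧ w ≠ u := by
  obtain ⟨w, -, hw⟩ : ∃ w ∈ Finset.univ, w ∉ ({u, v} : Finset V) :=
    Finset.exists_mem_notMem_of_card_lt_card ((Finset.card_le_two).trans_lt hcard)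
  obtain ⟨d, -, hd, hd'⟩ := (hconn.preconnected u w).some.exists_boundary_dart
    {u, v} (Set.mem_insert u _) (by simpa using hw)
  simp only [Set.mem_insert_iff, Set.mem_singleton_iff, not_or] at hd hd'
  rcases hd with hd | hd
  · exact ⟨_, .inl ⟨hd ▸ d.adj, hd'.2⟩⟩
  · exact ⟨_, .inr ⟨hd ▸ d.adj, hd'.1⟩⟩

section edgeCliques

variable [Fintype V] [DecidableEq V] {G : SimpleGraph V} [DecidableRel G.Adj]

variable (G) in
def edgeCliques : Finset (Finset V) :=
  G.edgeFinset.image Sym2.toFinset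

lemma isClique_of_mem_edgeCliques {C : Finset V} (hC : C ∈ G.edgeCliques) :
    G.IsClique (C : Set V) := by
  obtain ⟨e, he, rfl⟩ := Finset.mem_image.mp hC
  exact isClique_toFinset (G.mem_edgeFinset.mp he)

lemma exists_mem_edgeCliques_of_adj {u v : V} (h : G.Adj u v) :
    ∃ C ∈ G.edgeCliques, u ∈ C ∧ v ∈ C :=
  ⟨s(u, v).toFinset, Finset.mem_image_of_mem _ (G.mem_edgeFinset.mpr h), by simp, by simp⟩

lemma cliqueKCover_edgeCliques : CliqueKCover G G.maxDegree G.edgeCliques := by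
  refine ⟨fun C => isClique_of_mem_edgeCliques, fun u v => exists_mem_edgeCliques_of_adj,
    fun v => ?_⟩
  have hsub : G.edgeCliques.filter (v ∈ ·) ⊆ (G.incidenceFinset v).image Sym2.toFinset := by
    intro C hC
    obtain ⟨hC, hvC⟩ := Finset.mem_filter.mp hC
    obtain ⟨e, he, rfl⟩ := Finset.mem_image.mp hC
    exact Finset.mem_image_of_mem _
      ((G.mem_incidenceFinset v e).mpr ⟨G.mem_edgeFinset.mp he, Sym2.mem_toFinset.mp hvC⟩)
  calc (G.edgeCliques.filter (v ∈ ·)).card ≤ (G.incidenceFinset v).card :=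
        (Finset.card_le_card hsub).trans Finset.card_image_le
    _ = G.degree v := G.card_incidenceFinset_eq_degree v
    _ ≤ G.maxDegree := G.degree_le_maxDegree v

lemma maxDegree_le_of_cliqueKCover (htf : G.CliqueFree 3) {k : ℕ} {𝒞 : Finset (Finset V)}
    (h : CliqueKCover G k 𝒞) : G.maxDegree ≤ k := by
  obtain ⟨hcl, hcov, hk⟩ := h
  refine G.maxDegree_le_of_forall_degree_le _ fun v => ?_
  rw [← card_incidenceFinset_eq_degree]
  refine (Finset.card_le_card_of_injOn Sym2.toFinset (fun e he => ?_)
    Sym2.toFinset_injective.injOn).trans (hk v)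
  obtain ⟨he, hve⟩ := (G.mem_incidenceFinset v e).mp he
  exact Finset.mem_filter.mpr ⟨toFinset_mem_of_isClique_cover htf hcl hcov he,
    Sym2.mem_toFinset.mpr hve⟩

lemma isLeast_cliqueKCover (htf : G.CliqueFree 3) :
    IsLeast {k | ∃ 𝒞 : Finset (Finset V), CliqueKCover G k 𝒞} G.maxDegree :=
  ⟨⟨_, cliqueKCover_edgeCliques⟩, fun _ ⟨_, h⟩ => maxDegree_le_of_cliqueKCover htf h⟩

lemma sepEqCover_edgeCliques (hconn : G.Connected) (hcard : 3 ≤ Fintype.card V) {k : ℕ}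
    (h : EdgeKColorable G k) : SepEqCover G k G.edgeCliques := by
  obtain ⟨c, hlt, hc⟩ := h
  have hext : ∀ e, Function.extend Sym2.toFinset c 0 e.toFinset = c e :=
    Sym2.toFinset_injective.extend_apply c 0
  refine ⟨fun C => isClique_of_mem_edgeCliques, fun u v => exists_mem_edgeCliques_of_adj,
    ⟨Function.extend Sym2.toFinset c 0, fun C hC => ?_, fun C hC D hD hne hCD => ?_⟩, ?_⟩
  · obtain ⟨e, he, rfl⟩ := Finset.mem_image.mp hC
    exact hext e ▸ hlt e (G.mem_edgeFinset.mp he)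
  · obtain ⟨e, he, rfl⟩ := Finset.mem_image.mp hC
    obtain ⟨e', he', rfl⟩ := Finset.mem_image.mp hD
    obtain ⟨w, hw⟩ := hCD
    rw [Finset.mem_inter, Sym2.mem_toFinset, Sym2.mem_toFinset] at hw
    rw [hext, hext]
    exact hc e (G.mem_edgeFinset.mp he) e' (G.mem_edgeFinset.mp he') (fun h => hne (h ▸ rfl))
      ⟨w, hw⟩
  · intro u v huv
    obtain ⟨w, ⟨hadj, hwv⟩ | ⟨hadj, hwu⟩⟩ := exists_adj_separating hconn hcard u v
    · exact ⟨s(u, w).toFinset, Finset.mem_image_of_mem _ (G.mem_edgeFinset.mpr hadj),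
        .inl ⟨by simp, by simp [huv.symm, hwv.symm]⟩⟩
    · exact ⟨s(v, w).toFinset, Finset.mem_image_of_mem _ (G.mem_edgeFinset.mpr hadj),
        .inr ⟨by simp, by simp [huv, hwu.symm]⟩⟩

lemma exists_sepEqCover_iff_edgeKColorable (hconn : G.Connected) (hcard : 3 ≤ Fintype.card V)
    (htf : G.CliqueFree 3) {k : ℕ} : (∃ 𝒞, SepEqCover G k 𝒞) ↔ EdgeKColorable G k :=
  ⟨fun ⟨_, h⟩ => edgeKColorable_of_sepEqCover htf h,
    fun h => ⟨_, sepEqCover_edgeCliques hconn hcard h⟩⟩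

end edgeCliques

end SimpleGraph

/-- For a connected triangle-free graph on at least 3 vertices, the Prague dimension of the
complement (minimal `k` with a separating equivalent `k`-cover) equals the edge chromatic
number `χ'(G)`; consequently `G` is fractal iff `G` is of class 2, i.e. `χ'(G) = Δ(G)+1`. -/
theorem stmt_5 {V : Type} [Fintype V] [DecidableEq V] (G : SimpleGraph V)
    [DecidableRel G.Adj] (hconn : G.Connected) (hcard : 3 ≤ Fintype.card V)
    (htf : G.CliqueFree 3) :
    sInf {k : ℕ | ∃ 𝒞 : Finset (Finset V), SepEqCover G k 𝒞} =
        sInf {k : ℕ | EdgeKColorable G k} ∧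
      (sInf {k : ℕ | ∃ 𝒞 : Finset (Finset V), CliqueKCover G k 𝒞} <
          sInf {k : ℕ | ∃ 𝒞 : Finset (Finset V), SepEqCover G k 𝒞} ↔
        sInf {k : ℕ | EdgeKColorable G k} = G.maxDegree + 1) := by
  have hsep : {k | ∃ 𝒞 : Finset (Finset V), SepEqCover G k 𝒞} = {k | EdgeKColorable G k} :=
    Set.ext fun _ => exists_sepEqCover_iff_edgeKColorable hconn hcard htf
  have hvizing := edgeKColorable_maxDegree_succ G
  have hupper : sInf {k | EdgeKColorable G k} ≤ G.maxDegree + 1 := Nat.sInf_le hvizing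
  have hlower : G.maxDegree ≤ sInf {k | EdgeKColorable G k} :=
    maxDegree_le_of_edgeKColorable (Nat.sInf_mem (s := {k | EdgeKColorable G k}) ⟨_, hvizing⟩)
  rw [hsep, (isLeast_cliqueKCover htf).csInf_eq]
  exact ⟨rfl, by omega⟩
end

section
/- Let G be a finite simple graph in which every clique has at most 3 vertices and every vertex belongs to at most one triangle. Then the minimal k such that G has a clique k-cover satisfies k = max over vertices v of (deg(v) − tr(v)), where tr(v) ∈ {0,1} is the number of triangles containing v (assume G has at least one edge). -/
/-!
Every edge at `v` either lies in the unique triangle through `v` or is an edge outside all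
triangles, so the family of all triangles together with the edges outside triangles is a clique
cover meeting `v` exactly `deg v - tr v` times. Conversely, in a `K₄`-free graph a clique through `v`
covers at most two neighbours of `v`, and two only if it is a triangle; since the neighbours of
`v` must all be covered, any cover meets `v` at least `deg v - tr v` times.
-/

open SimpleGraph

open Finset

theorem Finset.exists_eq_pair_of_card_eq_two {α : Type*} [DecidableEq α] {e : Finset α} {v : α}
    (he : #e = 2) (hv : v ∈ e) : ∃ u, u ≠ v ∧ e = {v, u} := by
  obtain ⟨a, b, hab, rfl⟩ := card_eq_two.1 he
  rcases (by simpa using hv : v = a ∨ v = b) with rfl | rfl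
  · exact ⟨b, hab.symm, rfl⟩
  · exact ⟨a, hab, pair_comm _ _⟩

namespace SimpleGraph

theorem IsClique.card_le_of_cliqueFree {V : Type*} {G : SimpleGraph V} {n : ℕ}
    (hG : G.CliqueFree (n + 1)) {C : Finset V} (hC : G.IsClique (C : Set V)) : #C ≤ n := by
  by_contra! h
  obtain ⟨t, htC, ht⟩ := C.exists_subset_card_eq (show n + 1 ≤ #C from h)
  exact hG t ⟨hC.subset (by exact_mod_cast htC), ht⟩

variable {V : Type} [Fintype V] [DecidableEq V] (G : SimpleGraph V) [DecidableRel G.Adj]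

def trianglesAt (v : V) : Finset (Finset V) := (G.cliqueFinset 3).filter (fun C => v ∈ C)

def edgesOutsideTriangles : Finset (Finset V) :=
  (G.cliqueFinset 2).filter (fun e => ∀ T ∈ G.cliqueFinset 3, ¬ e ⊆ T)

def triangleEdgeCover : Finset (Finset V) := G.cliqueFinset 3 ∪ G.edgesOutsideTriangles

variable {G}

theorem mem_trianglesAt {v : V} {T : Finset V} :
    T ∈ G.trianglesAt v ↔ G.IsNClique 3 T ∧ v ∈ T := by
  rw [trianglesAt, mem_filter, mem_cliqueFinset_iff]

section LowerBound

variable {𝒞 : Finset (Finset V)}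

theorem degree_le_sum_card_erase (hcov : ∀ u v : V, G.Adj u v → ∃ C ∈ 𝒞, u ∈ C ∧ v ∈ C)
    (v : V) : G.degree v ≤ ∑ C ∈ 𝒞.filter (fun C => v ∈ C), #(C.erase v) := by
  have hsub : G.neighborFinset v ⊆ (𝒞.filter (fun C => v ∈ C)).biUnion (·.erase v) := by
    intro u hu
    have hvu := (G.mem_neighborFinset v u).1 hu
    obtain ⟨C, hC, hvC, huC⟩ := hcov v u hvu
    exact mem_biUnion.2 ⟨C, mem_filter.2 ⟨hC, hvC⟩, mem_erase.2 ⟨hvu.ne', huC⟩⟩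
  calc G.degree v = #(G.neighborFinset v) := (G.card_neighborFinset_eq_degree v).symm
    _ ≤ _ := card_le_card hsub
    _ ≤ _ := card_biUnion_le

theorem sum_card_erase_le_card_add_card_trianglesAt (h4 : G.CliqueFree 4)
    (hcl : ∀ C ∈ 𝒞, G.IsClique (C : Set V)) (v : V) :
    ∑ C ∈ 𝒞.filter (fun C => v ∈ C), #(C.erase v) ≤
      #(𝒞.filter (fun C => v ∈ C)) + #(G.trianglesAt v) := by
  set F := 𝒞.filter (fun C => v ∈ C)
  have hterm : ∀ C ∈ F, #(C.erase v) ≤ 1 + if C ∈ G.trianglesAt v then 1 else 0 := by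
    intro C hC
    obtain ⟨hC𝒞, hvC⟩ := mem_filter.1 hC
    have h3 : #C ≤ 3 := (hcl C hC𝒞).card_le_of_cliqueFree h4
    rw [card_erase_of_mem hvC]
    by_cases hC3 : #C = 3
    · rw [if_pos (mem_trianglesAt.2 ⟨⟨hcl C hC𝒞, hC3⟩, hvC⟩)]
      omega
    · split <;> omega
  calc ∑ C ∈ F, #(C.erase v) ≤ ∑ C ∈ F, (1 + if C ∈ G.trianglesAt v then 1 else 0) :=
        sum_le_sum hterm
    _ = #F + #(F.filter (· ∈ G.trianglesAt v)) := by
        rw [sum_add_distrib, sum_const, smul_eq_mul, mul_one, sum_boole, Nat.cast_id]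
    _ ≤ #F + #(G.trianglesAt v) := by
        gcongr
        exact fun C hC => (mem_filter.1 hC).2

theorem CliqueKCover.degree_sub_card_trianglesAt_le {k : ℕ} (h4 : G.CliqueFree 4)
    (h : CliqueKCover G k 𝒞) (v : V) : G.degree v - #(G.trianglesAt v) ≤ k := by
  obtain ⟨hcl, hcov, hcard⟩ := h
  have := (degree_le_sum_card_erase hcov v).trans
    (sum_card_erase_le_card_add_card_trianglesAt h4 hcl v)
  have := hcard v
  omega

end LowerBound

section UpperBound

theorem isClique_of_mem_triangleEdgeCover {C : Finset V} (hC : C ∈ G.triangleEdgeCover) :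
    G.IsClique (C : Set V) := by
  rcases mem_union.1 hC with hC | hC
  · exact (mem_cliqueFinset_iff.1 hC).1
  · exact (mem_cliqueFinset_iff.1 (mem_filter.1 hC).1).1

theorem exists_mem_triangleEdgeCover_of_adj {u v : V} (huv : G.Adj u v) :
    ∃ C ∈ G.triangleEdgeCover, u ∈ C ∧ v ∈ C := by
  by_cases h : ∃ T ∈ G.cliqueFinset 3, {u, v} ⊆ T
  · obtain ⟨T, hT, huvT⟩ := h
    exact ⟨T, mem_union_left _ hT, huvT (by simp), huvT (by simp)⟩
  · push Not at h
    have hpair : G.IsNClique 2 {u, v} :=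
      G.isNClique_iff.2 ⟨by rw [coe_pair]; exact isClique_pair.2 fun _ => huv, card_pair huv.ne⟩
    exact ⟨{u, v}, mem_union_right _ (mem_filter.2 ⟨mem_cliqueFinset_iff.2 hpair, h⟩),
      by simp, by simp⟩

theorem biUnion_trianglesAt_erase_subset_neighborFinset (v : V) :
    (G.trianglesAt v).biUnion (·.erase v) ⊆ G.neighborFinset v := by
  intro u hu
  obtain ⟨T, hT, huT⟩ := mem_biUnion.1 hu
  obtain ⟨hT3, hvT⟩ := mem_trianglesAt.1 hT
  obtain ⟨hne, huT⟩ := mem_erase.1 huT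
  exact (G.mem_neighborFinset v u).2 (hT3.1 hvT huT hne.symm)

theorem card_biUnion_trianglesAt_erase {v : V} (htr : #(G.trianglesAt v) ≤ 1) :
    #((G.trianglesAt v).biUnion (·.erase v)) = 2 * #(G.trianglesAt v) := by
  rcases Nat.le_one_iff_eq_zero_or_eq_one.1 htr with h0 | h1
  · simp [card_eq_zero.1 h0]
  · obtain ⟨T, hT⟩ := card_eq_one.1 h1
    obtain ⟨hT3, hvT⟩ := mem_trianglesAt.1 (hT ▸ mem_singleton_self T)
    rw [hT, singleton_biUnion, card_erase_of_mem hvT, hT3.2, card_singleton]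

theorem filter_edgesOutsideTriangles_subset_image (v : V) :
    G.edgesOutsideTriangles.filter (fun C => v ∈ C) ⊆
      (G.neighborFinset v \ (G.trianglesAt v).biUnion (·.erase v)).image
        (fun u => ({v, u} : Finset V)) := by
  intro e he
  obtain ⟨he, hve⟩ := mem_filter.1 he
  obtain ⟨he2, hnotri⟩ := mem_filter.1 he
  obtain ⟨u, hu, rfl⟩ := Finset.exists_eq_pair_of_card_eq_two (mem_cliqueFinset_iff.1 he2).2 hve
  have hadj : G.Adj v u := (mem_cliqueFinset_iff.1 he2).1 (by simp) (by simp) hu.symm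
  have huB : u ∉ (G.trianglesAt v).biUnion (·.erase v) := by
    intro huB
    obtain ⟨T, hT, huT⟩ := mem_biUnion.1 huB
    obtain ⟨hT3, hvT⟩ := mem_trianglesAt.1 hT
    exact hnotri T (mem_cliqueFinset_iff.2 hT3) (insert_subset hvT
      (singleton_subset_iff.2 (mem_of_mem_erase huT)))
  exact mem_image.2 ⟨u, mem_sdiff.2 ⟨(G.mem_neighborFinset v u).2 hadj, huB⟩, rfl⟩

theorem card_filter_triangleEdgeCover_le {v : V} (htr : #(G.trianglesAt v) ≤ 1) :
    #(G.triangleEdgeCover.filter (fun C => v ∈ C)) ≤ G.degree v - #(G.trianglesAt v) := by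
  have hsplit : #(G.triangleEdgeCover.filter (fun C => v ∈ C)) ≤
      #(G.trianglesAt v) + #(G.edgesOutsideTriangles.filter (fun C => v ∈ C)) := by
    rw [triangleEdgeCover, filter_union]
    exact card_union_le _ _
  set B := (G.trianglesAt v).biUnion (·.erase v)
  have hBN : B ⊆ G.neighborFinset v := biUnion_trianglesAt_erase_subset_neighborFinset v
  have hB : #B = 2 * #(G.trianglesAt v) := card_biUnion_trianglesAt_erase htr
  have hBdeg : #B ≤ G.degree v := card_le_card hBN
  have hE : #(G.edgesOutsideTriangles.filter (fun C => v ∈ C)) ≤ G.degree v - #B :=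
    calc _ ≤ #((G.neighborFinset v \ B).image (fun u => ({v, u} : Finset V))) :=
          card_le_card (filter_edgesOutsideTriangles_subset_image v)
      _ ≤ #(G.neighborFinset v \ B) := card_image_le
      _ = G.degree v - #B := card_sdiff_of_subset hBN
  omega

theorem cliqueKCover_triangleEdgeCover (htr : ∀ v : V, #(G.trianglesAt v) ≤ 1) :
    CliqueKCover G (univ.sup fun v => G.degree v - #(G.trianglesAt v)) G.triangleEdgeCover :=
  ⟨fun _ => isClique_of_mem_triangleEdgeCover, fun _ _ => exists_mem_triangleEdgeCover_of_adj,
    fun v => (card_filter_triangleEdgeCover_le (htr v)).trans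
      (le_sup (f := fun v => G.degree v - #(G.trianglesAt v)) (mem_univ v))⟩

end UpperBound

theorem isLeast_cliqueKCover_s10 (h4 : G.CliqueFree 4) (htr : ∀ v : V, #(G.trianglesAt v) ≤ 1) :
    IsLeast {k : ℕ | ∃ 𝒞 : Finset (Finset V), CliqueKCover G k 𝒞}
      (univ.sup fun v => G.degree v - #(G.trianglesAt v)) :=
  ⟨⟨_, cliqueKCover_triangleEdgeCover htr⟩, fun _ ⟨_, h𝒞⟩ =>
    Finset.sup_le fun v _ => h𝒞.degree_sub_card_trianglesAt_le h4 v⟩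

end SimpleGraph

theorem stmt_10_general {V : Type} [Fintype V] [DecidableEq V] (G : SimpleGraph V)
    [DecidableRel G.Adj] (h4 : G.CliqueFree 4)
    (htr : ∀ v : V, ((G.cliqueFinset 3).filter (fun C => v ∈ C)).card ≤ 1) :
    sInf {k : ℕ | ∃ 𝒞 : Finset (Finset V), CliqueKCover G k 𝒞} =
      Finset.univ.sup
        (fun v : V => G.degree v - ((G.cliqueFinset 3).filter (fun C => v ∈ C)).card) :=
  (isLeast_cliqueKCover_s10 h4 htr).csInf_eq

/-- If every clique of `G` has at most 3 vertices, every vertex lies in at most one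
triangle, and `G` has an edge, then the minimal `k` with a clique `k`-cover equals
`max_v (deg(v) - tr(v))`, where `tr(v)` is the number of triangles containing `v`. -/
theorem stmt_10 {V : Type} [Fintype V] [DecidableEq V] (G : SimpleGraph V)
    [DecidableRel G.Adj] (h4 : G.CliqueFree 4)
    (htr : ∀ v : V, ((G.cliqueFinset 3).filter (fun C => v ∈ C)).card ≤ 1)
    (he : G.edgeSet.Nonempty) :
    sInf {k : ℕ | ∃ 𝒞 : Finset (Finset V), CliqueKCover G k 𝒞} =
      Finset.univ.sup
        (fun v : V => G.degree v - ((G.cliqueFinset 3).filter (fun C => v ∈ C)).card) :=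
  stmt_10_general G h4 htr
end

section
/- A connected subcubic graph G on at least 5 vertices has rank dimension at most 2 (i.e., is the line graph of a multigraph) if and only if G is claw-free. -/
/-!
If a vertex `v` of a claw-free subcubic graph lay in three maximal cliques, their traces on the
neighbourhood `N(v)` would be three pairwise incomparable subsets of a set of at most three
elements: either three singletons, which form a claw with `v`, or the three pairs of a triangle,
which together with `v` span a clique strictly containing each of the three cliques. So the
maximal cliques form a clique 2-cover. Conversely, in a clique 2-cover the three edges of a claw
`a; b, c, d` would need three different cliques through `a`.
-/

open SimpleGraph

open Finset

namespace Finset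

variable {α : Type*} {N X Y Z A B C : Finset α}

theorem nonempty_and_ssubset_of_incomparable (hX : X ⊆ N) (hY : Y ⊆ N) (hXY : ¬X ⊆ Y)
    (hYX : ¬Y ⊆ X) : X.Nonempty ∧ X ⊂ N := by
  refine ⟨nonempty_iff_ne_empty.2 ?_, ssubset_iff_subset_ne.2 ⟨hX, ?_⟩⟩
  · rintro rfl
    exact hXY (empty_subset Y)
  · rintro rfl
    exact hYX hY

variable [DecidableEq α]

theorem subset_of_card_eq_one_of_card_eq_two (hN : #N ≤ 3) (hXN : X ⊆ N) (hYN : Y ⊆ N)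
    (hZN : Z ⊆ N) (hX : #X = 1) (hY : #Y = 2) (hXY : ¬X ⊆ Y) (hXZ : ¬X ⊆ Z) : Z ⊆ Y := by
  obtain ⟨a, rfl⟩ := card_eq_one.1 hX
  rw [singleton_subset_iff] at hXY hXZ hXN
  have hN_eq : insert a Y = N :=
    eq_of_subset_of_card_le (insert_subset hXN hYN) (by rw [card_insert_of_notMem hXY]; omega)
  rw [← subset_insert_iff_of_notMem hXZ, hN_eq]
  exact hZN

theorem card_eq_one_or_card_eq_two_of_incomparable (hN : #N ≤ 3) (hA : A ⊆ N) (hB : B ⊆ N)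
    (hC : C ⊆ N) (hAB : ¬A ⊆ B) (hBA : ¬B ⊆ A) (hAC : ¬A ⊆ C) (hCA : ¬C ⊆ A) (hBC : ¬B ⊆ C)
    (hCB : ¬C ⊆ B) :
    (#A = 1 ∧ #B = 1 ∧ #C = 1) ∨ (#A = 2 ∧ #B = 2 ∧ #C = 2) := by
  have bounds : ∀ {X Y : Finset α}, X ⊆ N → Y ⊆ N → ¬X ⊆ Y → ¬Y ⊆ X → 0 < #X ∧ #X < 3 :=
    fun hX hY hXY hYX =>
      have h := nonempty_and_ssubset_of_incomparable hX hY hXY hYX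
      ⟨h.1.card_pos, (card_lt_card h.2).trans_le hN⟩
  have mixed : ∀ {X Y Z : Finset α}, X ⊆ N → Y ⊆ N → Z ⊆ N → ¬X ⊆ Y → ¬X ⊆ Z → ¬Z ⊆ Y →
      ¬(#X = 1 ∧ #Y = 2) :=
    fun hX hY hZ hXY hXZ hZY h =>
      hZY (subset_of_card_eq_one_of_card_eq_two hN hX hY hZ h.1 h.2 hXY hXZ)
  have := bounds hA hB hAB hBA
  have := bounds hB hA hBA hAB
  have := bounds hC hA hCA hAC
  have := mixed hA hB hC hAB hAC hCB
  have := mixed hA hC hB hAC hAB hBC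
  have := mixed hB hA hC hBA hBC hCA
  have := mixed hB hC hA hBC hBA hAC
  have := mixed hC hA hB hCA hCB hBA
  have := mixed hC hB hA hCB hCA hAB
  omega

theorem powersetCard_two_eq_of_card_le_three (hN : #N ≤ 3) (hA : A ∈ N.powersetCard 2)
    (hB : B ∈ N.powersetCard 2) (hC : C ∈ N.powersetCard 2) (hAB : A ≠ B) (hAC : A ≠ C)
    (hBC : B ≠ C) : N.powersetCard 2 = {A, B, C} := by
  refine (eq_of_subset_of_card_le ?_ ?_).symm
  · simp only [insert_subset_iff, singleton_subset_iff]
    exact ⟨hA, hB, hC⟩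
  · rw [card_powersetCard, card_insert_of_notMem (by simp [hAB, hAC]),
      card_pair hBC]
    exact (Nat.choose_le_choose 2 hN).trans (by decide)

end Finset

namespace SimpleGraph

variable {V : Type*} (G : SimpleGraph V)

def ClawFree : Prop :=
  ∀ a b c d : V, G.Adj a b → G.Adj a c → G.Adj a d →
    b ≠ c → b ≠ d → c ≠ d → (G.Adj b c ∨ G.Adj b d ∨ G.Adj c d)

abbrev IsMaximalCliqueFinset (s : Finset V) : Prop :=
  Maximal (fun t : Finset V => G.IsClique (t : Set V)) s

variable {G} [DecidableEq V] {v x y : V} {C D : Finset V}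

theorem IsClique.erase_subset_neighborFinset [Fintype (G.neighborSet v)]
    (hC : G.IsClique (C : Set V)) (hv : v ∈ C) : C.erase v ⊆ G.neighborFinset v := fun x hx =>
  (G.mem_neighborFinset v x).2 (hC hv (mem_of_mem_erase hx) (ne_of_mem_erase hx).symm)

theorem IsMaximalCliqueFinset.erase_not_subset (hC : G.IsMaximalCliqueFinset C)
    (hD : G.IsClique (D : Set V)) (hv : v ∈ D) (hCD : C ≠ D) : ¬C.erase v ⊆ D.erase v := by
  intro h
  refine hCD (hC.eq_of_le hD ?_)
  calc C ⊆ insert v (C.erase v) := insert_erase_subset v C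
    _ ⊆ insert v (D.erase v) := insert_subset_insert v h
    _ = D := insert_erase hv

theorem IsMaximalCliqueFinset.not_adj (hC : G.IsMaximalCliqueFinset {v, y}) (hx : G.Adj v x)
    (hxy : x ≠ y) : ¬G.Adj x y := by
  intro hadj
  have hclique : G.IsClique ((insert x {v, y} : Finset V) : Set V) := by
    rw [coe_insert, coe_pair, isClique_insert]
    refine ⟨by simpa using hC.prop, fun b hb _ => ?_⟩
    rcases hb with rfl | rfl
    · exact hx.symm
    · exact hadj
  have hmem : x ∈ ({v, y} : Finset V) := by
    rw [hC.eq_of_le hclique (subset_insert x _)]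
    exact mem_insert_self x _
  rcases mem_insert.1 hmem with h | h
  · exact hx.ne' h
  · exact hxy (mem_singleton.1 h)

theorem isClique_of_three_pairs {N A B C : Finset V} (hN : #N ≤ 3) (hA : A ∈ N.powersetCard 2)
    (hB : B ∈ N.powersetCard 2) (hC : C ∈ N.powersetCard 2) (hAB : A ≠ B) (hAC : A ≠ C)
    (hBC : B ≠ C) (hAc : G.IsClique (A : Set V)) (hBc : G.IsClique (B : Set V))
    (hCc : G.IsClique (C : Set V)) : G.IsClique (N : Set V) := by
  intro x hx y hy hxy
  have hpair : {x, y} ∈ N.powersetCard 2 :=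
    mem_powersetCard.2 ⟨insert_subset hx (singleton_subset_iff.2 hy), card_pair hxy⟩
  rw [powersetCard_two_eq_of_card_le_three hN hA hB hC hAB hAC hBC] at hpair
  have adj_of : ∀ P : Finset V, G.IsClique (P : Set V) → {x, y} = P → G.Adj x y :=
    fun P hP h => hP (by simp [← h]) (by simp [← h]) hxy
  simp only [mem_insert, mem_singleton] at hpair
  rcases hpair with h | h | h
  · exact adj_of A hAc h
  · exact adj_of B hBc h
  · exact adj_of C hCc h

theorem ClawFree.not_three_maximal_edges {b c d : V} (hcf : G.ClawFree)
    (hc : G.IsMaximalCliqueFinset {v, c})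
    (hd : G.IsMaximalCliqueFinset {v, d}) (hvb : G.Adj v b) (hvc : G.Adj v c) (hvd : G.Adj v d)
    (hbc : b ≠ c) (hbd : b ≠ d) (hcd : c ≠ d) : False := by
  rcases hcf v b c d hvb hvc hvd hbc hbd hcd with h | h | h
  · exact hc.not_adj hvb hbc h
  · exact hd.not_adj hvb hbd h
  · exact hd.not_adj hvc hcd h

variable [Fintype V] [DecidableRel G.Adj]

theorem IsMaximalCliqueFinset.erase_eq_neighborFinset (hC : G.IsMaximalCliqueFinset C)
    (hv : v ∈ C) (hN : G.IsClique (G.neighborFinset v : Set V)) :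
    C.erase v = G.neighborFinset v := by
  have hstar : G.IsClique ((insert v (G.neighborFinset v) : Finset V) : Set V) := by
    rw [coe_insert, isClique_insert]
    exact ⟨hN, fun b hb _ => (G.mem_neighborFinset v b).1 hb⟩
  have hC_eq : C = insert v (G.neighborFinset v) := hC.eq_of_le hstar
    ((insert_erase_subset v C).trans
      (insert_subset_insert v (hC.prop.erase_subset_neighborFinset hv)))
  rw [hC_eq, erase_insert (G.notMem_neighborFinset_self v)]

theorem ClawFree.not_three_maximalCliques {C₁ C₂ C₃ : Finset V} (hcf : G.ClawFree)
    (hv : G.degree v ≤ 3) (h₁ : G.IsMaximalCliqueFinset C₁) (h₂ : G.IsMaximalCliqueFinset C₂)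
    (h₃ : G.IsMaximalCliqueFinset C₃) (hv₁ : v ∈ C₁) (hv₂ : v ∈ C₂) (hv₃ : v ∈ C₃)
    (h₁₂ : C₁ ≠ C₂) (h₁₃ : C₁ ≠ C₃) (h₂₃ : C₂ ≠ C₃) : False := by
  set N := G.neighborFinset v
  have hN : #N ≤ 3 := (G.card_neighborFinset_eq_degree v).trans_le hv
  have hA := h₁.prop.erase_subset_neighborFinset hv₁
  have hB := h₂.prop.erase_subset_neighborFinset hv₂
  have hC := h₃.prop.erase_subset_neighborFinset hv₃
  have hAB := h₁.erase_not_subset h₂.prop hv₂ h₁₂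
  have hBA := h₂.erase_not_subset h₁.prop hv₁ h₁₂.symm
  have hAC := h₁.erase_not_subset h₃.prop hv₃ h₁₃
  have hCA := h₃.erase_not_subset h₁.prop hv₁ h₁₃.symm
  have hBC := h₂.erase_not_subset h₃.prop hv₃ h₂₃
  have hCB := h₃.erase_not_subset h₂.prop hv₂ h₂₃.symm
  rcases card_eq_one_or_card_eq_two_of_incomparable hN hA hB hC hAB hBA hAC hCA hBC hCB with
    ⟨hA₁, hB₁, hC₁⟩ | ⟨hA₂, hB₂, hC₂⟩
  · obtain ⟨b, hb⟩ := card_eq_one.1 hA₁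
    obtain ⟨c, hc⟩ := card_eq_one.1 hB₁
    obtain ⟨d, hd⟩ := card_eq_one.1 hC₁
    rw [← insert_erase hv₂, hc] at h₂
    rw [← insert_erase hv₃, hd] at h₃
    rw [hb, singleton_subset_iff] at hA
    rw [hc, singleton_subset_iff] at hB
    rw [hd, singleton_subset_iff] at hC
    refine hcf.not_three_maximal_edges h₂ h₃ ((G.mem_neighborFinset v b).1 hA)
      ((G.mem_neighborFinset v c).1 hB) ((G.mem_neighborFinset v d).1 hC) ?_ ?_ ?_
    · rintro rfl; exact hAB (by rw [hb, hc])
    · rintro rfl; exact hAC (by rw [hb, hd])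
    · rintro rfl; exact hBC (by rw [hc, hd])
  · have hN_clique : G.IsClique (N : Set V) :=
      isClique_of_three_pairs hN (mem_powersetCard.2 ⟨hA, hA₂⟩) (mem_powersetCard.2 ⟨hB, hB₂⟩)
        (mem_powersetCard.2 ⟨hC, hC₂⟩) (fun h => hAB h.subset) (fun h => hAC h.subset)
        (fun h => hBC h.subset) (h₁.prop.subset (coe_subset.2 (erase_subset v C₁)))
        (h₂.prop.subset (coe_subset.2 (erase_subset v C₂)))
        (h₃.prop.subset (coe_subset.2 (erase_subset v C₃)))
    exact hBA (h₁.erase_eq_neighborFinset hv₁ hN_clique ▸ hB)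

end SimpleGraph

theorem CliqueKCover.clawFree {V : Type} [Fintype V] [DecidableEq V] {G : SimpleGraph V}
    {𝒞 : Finset (Finset V)} (h𝒞 : CliqueKCover G 2 𝒞) : G.ClawFree := by
  obtain ⟨hclique, hcover, hcount⟩ := h𝒞
  intro a b c d hab hac had hbc hbd hcd
  by_contra! hnon
  have ne_of_not_adj : ∀ {C D : Finset V} {x y : V}, C ∈ 𝒞 → x ∈ C → y ∈ D → x ≠ y →
      ¬G.Adj x y → C ≠ D := fun hC hx hy hxy hn h => hn (hclique _ hC hx (h ▸ hy) hxy)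
  obtain ⟨Cb, hCb, haCb, hbCb⟩ := hcover a b hab
  obtain ⟨Cc, hCc, haCc, hcCc⟩ := hcover a c hac
  obtain ⟨Cd, hCd, haCd, hdCd⟩ := hcover a d had
  have h3 : 2 < #{C ∈ 𝒞 | a ∈ C} := two_lt_card_iff.2
    ⟨Cb, Cc, Cd, mem_filter.2 ⟨hCb, haCb⟩, mem_filter.2 ⟨hCc, haCc⟩, mem_filter.2 ⟨hCd, haCd⟩,
      ne_of_not_adj hCb hbCb hcCc hbc hnon.1, ne_of_not_adj hCb hbCb hdCd hbd hnon.2.1,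
      ne_of_not_adj hCc hcCc hdCd hcd hnon.2.2⟩
  exact (hcount a).not_gt h3

open Classical in
theorem SimpleGraph.ClawFree.cliqueKCover_maximalCliques {V : Type} [Fintype V] [DecidableEq V]
    {G : SimpleGraph V} [DecidableRel G.Adj] (hcf : G.ClawFree) (hsub : ∀ v, G.degree v ≤ 3) :
    CliqueKCover G 2 {C | G.IsMaximalCliqueFinset C} := by
  refine ⟨fun C hC => (mem_filter.1 hC).2.prop, fun u w huw => ?_, fun v => ?_⟩
  · obtain ⟨D, huwD, hD⟩ :=
      Finite.exists_le_maximal (p := fun t : Finset V => G.IsClique (t : Set V)) (a := {u, w})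
        (by rw [coe_pair]; exact isClique_pair.2 fun _ => huw)
    exact ⟨D, mem_filter.2 ⟨mem_univ D, hD⟩, huwD (by simp), huwD (by simp)⟩
  · by_contra! h
    obtain ⟨C₁, C₂, C₃, h₁, h₂, h₃, h₁₂, h₁₃, h₂₃⟩ := two_lt_card_iff.1 h
    simp only [filter_filter, mem_filter, mem_univ, true_and] at h₁ h₂ h₃
    exact hcf.not_three_maximalCliques (hsub v) h₁.1 h₂.1 h₃.1 h₁.2 h₂.2 h₃.2 h₁₂ h₁₃ h₂₃

theorem stmt_12_general {V : Type} [Fintype V] [DecidableEq V] (G : SimpleGraph V)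
    [DecidableRel G.Adj] (hsub : ∀ v : V, G.degree v ≤ 3) :
    (∃ 𝒞 : Finset (Finset V), CliqueKCover G 2 𝒞) ↔
      ∀ a b c d : V, G.Adj a b → G.Adj a c → G.Adj a d →
        b ≠ c → b ≠ d → c ≠ d → (G.Adj b c ∨ G.Adj b d ∨ G.Adj c d) :=
  ⟨fun ⟨_, h𝒞⟩ => h𝒞.clawFree, fun hcf => ⟨_, ClawFree.cliqueKCover_maximalCliques hcf hsub⟩⟩

/-- A connected subcubic graph on at least 5 vertices has rank dimension at most 2
(i.e. admits a clique 2-cover, equivalently is a line graph of a multigraph)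
iff it is claw-free. -/
theorem stmt_12 {V : Type} [Fintype V] [DecidableEq V] (G : SimpleGraph V)
    [DecidableRel G.Adj] (hconn : G.Connected) (hcard : 5 ≤ Fintype.card V)
    (hsub : ∀ v : V, G.degree v ≤ 3) :
    (∃ 𝒞 : Finset (Finset V), CliqueKCover G 2 𝒞) ↔
      ∀ a b c d : V, G.Adj a b → G.Adj a c → G.Adj a d →
        b ≠ c → b ≠ d → c ≠ d → (G.Adj b c ∨ G.Adj b d ∨ G.Adj c d) :=
  stmt_12_general G hsub
end

section
/- For every n ≥ 2, the Sierpinski gasket graph S_n admits a clique 2-cover, and moreover a separating equivalent 3-cover in which every non-contact vertex is covered by exactly two cliques, every contact vertex by exactly one clique, and cliques containing distinct contact vertices receive distinct colors. -/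
/-!
Contact `j` of copy `i` is glued to contact `i` of copy `j`, and nothing else is identified.
The cliques of `S_{n+1}` are the images of the cliques of `S_n` in the three copies, and a
clique inherits its color. A vertex that is not glued keeps its cliques; a glued vertex is a
contact of both its copies, so it collects one clique from each: contacts stay in one clique and
all other vertices in two. If every clique through contact `k` has color `k`, the two cliques
at the glued vertex have colors `j ≠ i`. Vertices in different copies are separated by any
clique of one of them, vertices of one copy by the image of a separating clique. The induction
starts at `S_2`, whose three triangles are colored by the index of their copy.
-/

open SimpleGraph

/-- A graph together with three designated contact vertices. -/
structure Tetrad where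
  V : Type
  G : SimpleGraph V
  x1 : V
  x2 : V
  x3 : V

/-- The gluing relation identifying contact vertices of three disjoint copies of `T`
in a cyclic fashion. -/
def glueRel (T : Tetrad) (a b : Fin 3 × T.V) : Prop :=
  (a = (0, T.x2) ∧ b = (1, T.x1)) ∨ (a = (1, T.x3) ∧ b = (2, T.x2)) ∨
    (a = (2, T.x1) ∧ b = (0, T.x3))

/-- Glue three disjoint copies of `T` along contact vertices; the three unidentified
contact vertices become the contact vertices of the result. -/
def glue (T : Tetrad) : Tetrad where
  V := Quot (glueRel T)
  G :=
    { Adj := fun u v => u ≠ v ∧ ∃ (i : Fin 3) (a b : T.V),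
        u = Quot.mk _ (i, a) ∧ v = Quot.mk _ (i, b) ∧ T.G.Adj a b
      symm := ⟨by
        rintro u v ⟨hne, i, a, b, hu, hv, hab⟩
        exact ⟨hne.symm, i, b, a, hv, hu, hab.symm⟩⟩
      loopless := ⟨fun u h => h.1 rfl⟩ }
  x1 := Quot.mk _ (0, T.x1)
  x2 := Quot.mk _ (1, T.x2)
  x3 := Quot.mk _ (2, T.x3)

/-- The Sierpinski gasket graphs: `SG 1 = K₃`, and `SG (n+1)` is the gluing of three
copies of `SG n`. (`SG n` is the graph `S_n` for `n ≥ 1`.) -/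
def SG : ℕ → Tetrad
  | 0 => ⟨Fin 3, ⊤, 0, 1, 2⟩
  | 1 => ⟨Fin 3, ⊤, 0, 1, 2⟩
  | n + 2 => glue (SG (n + 1))

/-- A clique `k`-cover, with set-valued clusters. -/
def CliqueKCoverS {V : Type} (G : SimpleGraph V) (k : ℕ) (𝒞 : Set (Set V)) : Prop :=
  (∀ C ∈ 𝒞, G.IsClique C) ∧
  (∀ u v : V, G.Adj u v → ∃ C ∈ 𝒞, u ∈ C ∧ v ∈ C) ∧
  (∀ v : V, {C ∈ 𝒞 | v ∈ C}.Finite ∧ {C ∈ 𝒞 | v ∈ C}.ncard ≤ k)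

/-- A separating equivalent `k`-cover with an explicit coloring `c` of the clusters. -/
def SepEqCoverWith {V : Type} (G : SimpleGraph V) (k : ℕ) (𝒞 : Set (Set V))
    (c : Set V → ℕ) : Prop :=
  (∀ C ∈ 𝒞, G.IsClique C) ∧
  (∀ u v : V, G.Adj u v → ∃ C ∈ 𝒞, u ∈ C ∧ v ∈ C) ∧
  (∀ C ∈ 𝒞, c C < k) ∧
  (∀ C ∈ 𝒞, ∀ D ∈ 𝒞, C ≠ D → (C ∩ D).Nonempty → c C ≠ c D) ∧
  (∀ u v : V, u ≠ v → ∃ C ∈ 𝒞, (u ∈ C ∧ v ∉ C) ∨ (v ∈ C ∧ u ∉ C))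

def cliquesAt {V : Type} (𝒞 : Set (Set V)) (v : V) : Set (Set V) := {C ∈ 𝒞 | v ∈ C}

namespace Tetrad

variable (T : Tetrad)

def contact : Fin 3 → T.V := ![T.x1, T.x2, T.x3]

def incl (i : Fin 3) (a : T.V) : (glue T).V := Quot.mk _ (i, a)

def inCopy (i : Fin 3) (C : Set T.V) : Set (glue T).V := T.incl i '' C

lemma exists_incl_eq (v : (glue T).V) : ∃ i a, T.incl i a = v := by
  obtain ⟨⟨i, a⟩, rfl⟩ := Quot.exists_rep v
  exact ⟨i, a, rfl⟩

lemma range_contact : Set.range T.contact = {T.x1, T.x2, T.x3} := by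
  rw [contact, Matrix.range_cons, Matrix.range_cons, Matrix.range_cons, Matrix.range_empty]
  simp only [Set.union_empty, Set.singleton_union]

lemma glue_contact (k : Fin 3) : (glue T).contact k = T.incl k (T.contact k) := by
  fin_cases k <;> rfl

variable {T}

lemma incl_eq_incl_iff (hT : Function.Injective T.contact) {i j : Fin 3} {a b : T.V} :
    T.incl i a = T.incl j b ↔ (i = j ∧ a = b) ∨ (i ≠ j ∧ a = T.contact j ∧ b = T.contact i) := by
  -- As the contacts are distinct, no vertex is glued to two others, so reflexivity and
  -- symmetry already close `glueRel` under transitivity.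
  let R : Fin 3 × T.V → Fin 3 × T.V → Prop := fun p q =>
    p = q ∨ (p.1 ≠ q.1 ∧ p.2 = T.contact q.1 ∧ q.2 = T.contact p.1)
  have hR : Equivalence R := by
    refine ⟨fun p => Or.inl rfl, ?_, ?_⟩
    · rintro p q (rfl | ⟨hpq, hp, hq⟩)
      exacts [Or.inl rfl, Or.inr ⟨hpq.symm, hq, hp⟩]
    · rintro p q s (rfl | ⟨hpq, hp, hq⟩) (rfl | ⟨hqs, hq', hs⟩)
      · exact Or.inl rfl
      · exact Or.inr ⟨hqs, hq', hs⟩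
      · exact Or.inr ⟨hpq, hp, hq⟩
      · have hps : p.1 = s.1 := hT (hq.symm.trans hq')
        exact Or.inl (Prod.ext hps (hp.trans hs.symm))
  have hle : ∀ p q, glueRel T p q → R p q := by
    rintro p q (⟨rfl, rfl⟩ | ⟨rfl, rfl⟩ | ⟨rfl, rfl⟩) <;>
      exact Or.inr ⟨by simp, rfl, rfl⟩
  have hge : ∀ p q, R p q → Relation.EqvGen (glueRel T) p q := by
    rintro ⟨i, a⟩ ⟨j, b⟩ (h | ⟨hij, ha, hb⟩)
    · exact h ▸ Relation.EqvGen.refl _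
    dsimp only at hij ha hb
    subst ha hb
    have : glueRel T (i, T.contact j) (j, T.contact i) ∨
        glueRel T (j, T.contact i) (i, T.contact j) := by
      fin_cases i <;> fin_cases j <;> simp_all [glueRel, contact]
    rcases this with h | h
    exacts [.rel _ _ h, .symm _ _ (.rel _ _ h)]
  have key : T.incl i a = T.incl j b ↔ R (i, a) (j, b) :=
    Quot.eq.trans ⟨fun h => hR.eqvGen_iff.1 (h.mono hle), hge _ _⟩
  simp only [key, R, Prod.mk.injEq]

lemma incl_injective (hT : Function.Injective T.contact) (i : Fin 3) :
    Function.Injective (T.incl i) := fun a b h => by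
  simpa using (incl_eq_incl_iff hT).1 h

lemma incl_mem_inCopy_iff (hT : Function.Injective T.contact) {i j : Fin 3} {a : T.V}
    {C : Set T.V} :
    T.incl i a ∈ T.inCopy j C ↔
      (j = i ∧ a ∈ C) ∨ (j ≠ i ∧ a = T.contact j ∧ T.contact i ∈ C) := by
  simp only [inCopy, Set.mem_image, incl_eq_incl_iff hT]
  constructor
  · rintro ⟨b, hb, ⟨rfl, rfl⟩ | ⟨hji, rfl, rfl⟩⟩
    exacts [Or.inl ⟨rfl, hb⟩, Or.inr ⟨hji, rfl, hb⟩]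
  · rintro (⟨rfl, ha⟩ | ⟨hji, rfl, hi⟩)
    exacts [⟨a, ha, Or.inl ⟨rfl, rfl⟩⟩, ⟨_, hi, Or.inr ⟨hji, rfl, rfl⟩⟩]

lemma incl_mem_inCopy_self (hT : Function.Injective T.contact) {i : Fin 3} {a : T.V}
    {C : Set T.V} : T.incl i a ∈ T.inCopy i C ↔ a ∈ C :=
  (incl_injective hT i).mem_set_image

lemma glue_contact_injective (hT : Function.Injective T.contact) :
    Function.Injective (glue T).contact := by
  intro k l h
  rw [glue_contact, glue_contact, incl_eq_incl_iff hT] at h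
  rcases h with ⟨hkl, -⟩ | ⟨hkl, h, -⟩
  exacts [hkl, absurd (hT h) hkl]

lemma incl_mem_range_glue_contact (hT : Function.Injective T.contact) {i : Fin 3} {a : T.V} :
    T.incl i a ∈ Set.range (glue T).contact ↔ a = T.contact i := by
  constructor
  · rintro ⟨k, h⟩
    rw [glue_contact, incl_eq_incl_iff hT] at h
    rcases h with ⟨rfl, h⟩ | ⟨hki, h, -⟩
    exacts [h.symm, absurd (hT h) hki]
  · rintro rfl
    exact ⟨i, glue_contact T i⟩

lemma inCopy_injective (hT : Function.Injective T.contact) (i : Fin 3) :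
    Function.Injective (T.inCopy i) :=
  Set.image_injective.2 (incl_injective hT i)

lemma inCopy_eq_inCopy (hT : Function.Injective T.contact) {i j : Fin 3} {C D : Set T.V}
    (hC : C.Nontrivial) (h : T.inCopy i C = T.inCopy j D) : i = j ∧ C = D := by
  obtain ⟨a, ha, a', ha', hne⟩ := hC
  have hmem : ∀ b ∈ C, j = i ∨ b = T.contact j := fun b hb => by
    have hb' : T.incl i b ∈ T.inCopy j D := h ▸ Set.mem_image_of_mem (T.incl i) hb
    rcases (incl_mem_inCopy_iff hT).1 hb' with ⟨hji, -⟩ | ⟨-, hbj, -⟩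
    exacts [Or.inl hji, Or.inr hbj]
  obtain rfl : i = j := by
    rcases hmem a ha with h₁ | h₁
    · exact h₁.symm
    rcases hmem a' ha' with h₂ | h₂
    exacts [h₂.symm, absurd (h₁.trans h₂.symm) hne]
  exact ⟨rfl, inCopy_injective hT i h⟩

def glueCov (𝒞 : Set (Set T.V)) : Set (Set (glue T).V) := ⋃ i, T.inCopy i '' 𝒞

lemma mem_glueCov {𝒞 : Set (Set T.V)} {S : Set (glue T).V} :
    S ∈ T.glueCov 𝒞 ↔ ∃ i, ∃ C ∈ 𝒞, T.inCopy i C = S := by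
  simp [glueCov]

lemma isClique_inCopy {C : Set T.V} (hC : T.G.IsClique C) (i : Fin 3) :
    (glue T).G.IsClique (T.inCopy i C) := by
  rintro _ ⟨a, ha, rfl⟩ _ ⟨b, hb, rfl⟩ hne
  exact ⟨hne, i, a, b, rfl, rfl, hC ha hb fun hab => hne (hab ▸ rfl)⟩

lemma cliquesAt_glueCov_incl (hT : Function.Injective T.contact) {𝒞 : Set (Set T.V)}
    {i : Fin 3} {a : T.V} (ha : ∀ j ≠ i, a ≠ T.contact j) :
    cliquesAt (T.glueCov 𝒞) (T.incl i a) = T.inCopy i '' cliquesAt 𝒞 a := by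
  ext S
  simp only [cliquesAt, mem_glueCov, Set.mem_ofPred_eq, Set.mem_image]
  constructor
  · rintro ⟨⟨j, C, hC, rfl⟩, hmem⟩
    rcases (incl_mem_inCopy_iff hT).1 hmem with ⟨rfl, haC⟩ | ⟨hji, hax, -⟩
    exacts [⟨C, ⟨hC, haC⟩, rfl⟩, absurd hax (ha j hji)]
  · rintro ⟨C, ⟨hC, haC⟩, rfl⟩
    exact ⟨⟨i, C, hC, rfl⟩, (incl_mem_inCopy_self hT).2 haC⟩

lemma cliquesAt_glueCov_incl_contact (hT : Function.Injective T.contact)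
    {𝒞 : Set (Set T.V)} {i j : Fin 3} (hij : i ≠ j) :
    cliquesAt (T.glueCov 𝒞) (T.incl i (T.contact j)) =
      T.inCopy i '' cliquesAt 𝒞 (T.contact j) ∪ T.inCopy j '' cliquesAt 𝒞 (T.contact i) := by
  ext S
  simp only [cliquesAt, mem_glueCov, Set.mem_ofPred_eq, Set.mem_union, Set.mem_image]
  constructor
  · rintro ⟨⟨k, C, hC, rfl⟩, hmem⟩
    rcases (incl_mem_inCopy_iff hT).1 hmem with ⟨rfl, hC'⟩ | ⟨-, hjk, hC'⟩
    · exact Or.inl ⟨C, ⟨hC, hC'⟩, rfl⟩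
    · obtain rfl := hT hjk
      exact Or.inr ⟨C, ⟨hC, hC'⟩, rfl⟩
  · rintro (⟨C, ⟨hC, hC'⟩, rfl⟩ | ⟨C, ⟨hC, hC'⟩, rfl⟩)
    · exact ⟨⟨i, C, hC, rfl⟩, (incl_mem_inCopy_self hT).2 hC'⟩
    · exact ⟨⟨j, C, hC, rfl⟩, (incl_mem_inCopy_iff hT).2 (Or.inr ⟨hij.symm, rfl, hC'⟩)⟩

/-- `nontrivial` keeps the images of a clique in different copies apart. -/
structure IsExactCliqueCover (T : Tetrad) (𝒞 : Set (Set T.V)) : Prop where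
  contact_injective : Function.Injective T.contact
  isClique : ∀ C ∈ 𝒞, T.G.IsClique C
  nontrivial : ∀ C ∈ 𝒞, C.Nontrivial
  covers : ∀ u v, T.G.Adj u v → ∃ C ∈ 𝒞, u ∈ C ∧ v ∈ C
  ncard_contact : ∀ k, (cliquesAt 𝒞 (T.contact k)).ncard = 1
  ncard_of_not_mem : ∀ v ∉ Set.range T.contact, (cliquesAt 𝒞 v).ncard = 2

namespace IsExactCliqueCover

variable {𝒞 : Set (Set T.V)}

lemma ncard_cliquesAt_eq_one_or_two (h : IsExactCliqueCover T 𝒞) (v : T.V) :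
    (cliquesAt 𝒞 v).ncard = 1 ∨ (cliquesAt 𝒞 v).ncard = 2 := by
  by_cases hv : v ∈ Set.range T.contact
  · obtain ⟨k, rfl⟩ := hv
    exact Or.inl (h.ncard_contact k)
  · exact Or.inr (h.ncard_of_not_mem v hv)

lemma ncard_cliquesAt_pos (h : IsExactCliqueCover T 𝒞) (v : T.V) :
    0 < (cliquesAt 𝒞 v).ncard := by
  rcases h.ncard_cliquesAt_eq_one_or_two v with hv | hv <;> omega

lemma finite_cliquesAt (h : IsExactCliqueCover T 𝒞) (v : T.V) : (cliquesAt 𝒞 v).Finite :=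
  Set.finite_of_ncard_pos (h.ncard_cliquesAt_pos v)

lemma exists_mem (h : IsExactCliqueCover T 𝒞) (v : T.V) : ∃ C ∈ 𝒞, v ∈ C :=
  Set.nonempty_of_ncard_ne_zero (h.ncard_cliquesAt_pos v).ne'

lemma ncard_cliquesAt_le_two (h : IsExactCliqueCover T 𝒞) (v : T.V) :
    (cliquesAt 𝒞 v).ncard ≤ 2 := by
  rcases h.ncard_cliquesAt_eq_one_or_two v with hv | hv <;> omega

lemma ncard_cliquesAt_glueCov_incl_contact (h : IsExactCliqueCover T 𝒞) {i j : Fin 3}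
    (hij : i ≠ j) : (cliquesAt (T.glueCov 𝒞) (T.incl i (T.contact j))).ncard = 2 := by
  have hT := h.contact_injective
  have hdisj : Disjoint (T.inCopy i '' cliquesAt 𝒞 (T.contact j))
      (T.inCopy j '' cliquesAt 𝒞 (T.contact i)) := by
    rw [Set.disjoint_left]
    rintro _ ⟨C, ⟨hC, -⟩, rfl⟩ ⟨D, -, hDC⟩
    exact hij (inCopy_eq_inCopy hT (h.nontrivial C hC) hDC.symm).1
  rw [cliquesAt_glueCov_incl_contact hT hij,
    Set.ncard_union_eq hdisj ((h.finite_cliquesAt _).image _) ((h.finite_cliquesAt _).image _),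
    Set.ncard_image_of_injective _ (inCopy_injective hT i),
    Set.ncard_image_of_injective _ (inCopy_injective hT j), h.ncard_contact, h.ncard_contact]

lemma glue_ncard_of_not_mem (h : IsExactCliqueCover T 𝒞) (v : (glue T).V)
    (hv : v ∉ Set.range (glue T).contact) : (cliquesAt (T.glueCov 𝒞) v).ncard = 2 := by
  have hT := h.contact_injective
  obtain ⟨i, a, rfl⟩ := T.exists_incl_eq v
  rw [incl_mem_range_glue_contact hT] at hv
  by_cases ha : a ∈ Set.range T.contact
  · obtain ⟨j, rfl⟩ := ha
    exact h.ncard_cliquesAt_glueCov_incl_contact fun hij => hv (hij ▸ rfl)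
  · rw [cliquesAt_glueCov_incl hT fun j _ haj => ha ⟨j, haj.symm⟩,
      Set.ncard_image_of_injective _ (inCopy_injective hT i), h.ncard_of_not_mem a ha]

end IsExactCliqueCover

theorem isExactCliqueCover_glue {𝒞 : Set (Set T.V)} (h : IsExactCliqueCover T 𝒞) :
    IsExactCliqueCover (glue T) (T.glueCov 𝒞) := by
  have hT := h.contact_injective
  refine ⟨glue_contact_injective hT, ?_, ?_, ?_, fun k => ?_, h.glue_ncard_of_not_mem⟩
  · intro S hS
    obtain ⟨i, C, hC, rfl⟩ := mem_glueCov.1 hS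
    exact isClique_inCopy (h.isClique C hC) i
  · intro S hS
    obtain ⟨i, C, hC, rfl⟩ := mem_glueCov.1 hS
    exact (h.nontrivial C hC).image (incl_injective hT i)
  · rintro u v ⟨-, i, a, b, rfl, rfl, hab⟩
    obtain ⟨C, hC, ha, hb⟩ := h.covers a b hab
    exact ⟨T.inCopy i C, mem_glueCov.2 ⟨i, C, hC, rfl⟩, ⟨a, ha, rfl⟩, ⟨b, hb, rfl⟩⟩
  · rw [glue_contact, cliquesAt_glueCov_incl hT fun j hjk hkj => hjk (hT hkj).symm,
      Set.ncard_image_of_injective _ (inCopy_injective hT k), h.ncard_contact]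

/-- A glued clique is `T.inCopy i C` for a unique `(i, C)` (`inCopy_eq_inCopy`), and then this is
`g i C`. -/
noncomputable def glueColoring (𝒞 : Set (Set T.V)) (g : Fin 3 → Set T.V → ℕ)
    (S : Set (glue T).V) : ℕ :=
  sInf {m | ∃ i, ∃ C ∈ 𝒞, T.inCopy i C = S ∧ g i C = m}

structure IsSeparatingColoring (T : Tetrad) (𝒞 : Set (Set T.V)) (c : Set T.V → ℕ) : Prop where
  color_lt : ∀ C ∈ 𝒞, c C < 3
  color_ne : ∀ C ∈ 𝒞, ∀ D ∈ 𝒞, C ≠ D → (C ∩ D).Nonempty → c C ≠ c D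
  color_contact : ∀ k, ∀ C ∈ 𝒞, T.contact k ∈ C → c C = k
  separates : ∀ u v, u ≠ v → ∃ C ∈ 𝒞, (u ∈ C ∧ v ∉ C) ∨ (v ∈ C ∧ u ∉ C)

namespace IsExactCliqueCover

variable {𝒞 : Set (Set T.V)} {g : Fin 3 → Set T.V → ℕ}

lemma glueColoring_inCopy (h : IsExactCliqueCover T 𝒞) {i : Fin 3} {C : Set T.V}
    (hC : C ∈ 𝒞) : T.glueColoring 𝒞 g (T.inCopy i C) = g i C := by
  have : {m | ∃ j, ∃ D ∈ 𝒞, T.inCopy j D = T.inCopy i C ∧ g j D = m} = {g i C} := by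
    ext m
    refine ⟨?_, fun hm => ⟨i, C, hC, rfl, hm.symm⟩⟩
    rintro ⟨j, D, hD, hDC, rfl⟩
    obtain ⟨rfl, rfl⟩ := inCopy_eq_inCopy h.contact_injective (h.nontrivial D hD) hDC
    rfl
  rw [glueColoring, this, csInf_singleton]

lemma glueColoring_ne (h : IsExactCliqueCover T 𝒞)
    (hsame : ∀ i, ∀ C ∈ 𝒞, ∀ D ∈ 𝒞, C ≠ D → (C ∩ D).Nonempty → g i C ≠ g i D)
    (hacross : ∀ i j, i ≠ j → ∀ C ∈ 𝒞, ∀ D ∈ 𝒞,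
      T.contact j ∈ C → T.contact i ∈ D → g i C ≠ g j D) :
    ∀ S ∈ T.glueCov 𝒞, ∀ S' ∈ T.glueCov 𝒞, S ≠ S' → (S ∩ S').Nonempty →
      T.glueColoring 𝒞 g S ≠ T.glueColoring 𝒞 g S' := by
  have hT := h.contact_injective
  intro S hS S' hS' hne ⟨v, hvS, hvS'⟩
  obtain ⟨i, C, hC, rfl⟩ := mem_glueCov.1 hS
  obtain ⟨j, D, hD, rfl⟩ := mem_glueCov.1 hS'
  obtain ⟨a, haC, rfl⟩ := hvS
  rw [h.glueColoring_inCopy hC, h.glueColoring_inCopy hD]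
  rcases (incl_mem_inCopy_iff hT).1 hvS' with ⟨rfl, haD⟩ | ⟨hji, rfl, hiD⟩
  · exact hsame _ C hC D hD (fun hCD => hne (hCD ▸ rfl)) ⟨a, haC, haD⟩
  · exact hacross i j hji.symm C hC D hD haC hiD

lemma glueColoring_contact (h : IsExactCliqueCover T 𝒞)
    (hcontact : ∀ k, ∀ C ∈ 𝒞, T.contact k ∈ C → g k C = k) :
    ∀ k, ∀ S ∈ T.glueCov 𝒞, (glue T).contact k ∈ S → T.glueColoring 𝒞 g S = k := by
  have hT := h.contact_injective
  intro k S hS hkS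
  obtain ⟨j, C, hC, rfl⟩ := mem_glueCov.1 hS
  rw [glue_contact, incl_mem_inCopy_iff hT] at hkS
  rcases hkS with ⟨rfl, hkC⟩ | ⟨hjk, hkj, -⟩
  · rw [h.glueColoring_inCopy hC, hcontact j C hC hkC]
  · exact absurd (hT hkj).symm hjk

/-- A clique through `u` in the copy of `u` misses every vertex outside that copy, so only
vertices of a common copy need `hsep`. -/
lemma glueCov_separates (h : IsExactCliqueCover T 𝒞)
    (hsep : ∀ i a b, a ≠ b → ∃ S ∈ T.glueCov 𝒞,
      (T.incl i a ∈ S ∧ T.incl i b ∉ S) ∨ (T.incl i b ∈ S ∧ T.incl i a ∉ S)) :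
    ∀ u v, u ≠ v → ∃ S ∈ T.glueCov 𝒞, (u ∈ S ∧ v ∉ S) ∨ (v ∈ S ∧ u ∉ S) := by
  intro u v huv
  obtain ⟨i, a, rfl⟩ := T.exists_incl_eq u
  by_cases hv : v ∈ Set.range (T.incl i)
  · obtain ⟨b, rfl⟩ := hv
    exact hsep i a b fun hab => huv (hab ▸ rfl)
  · obtain ⟨C, hC, haC⟩ := h.exists_mem a
    exact ⟨T.inCopy i C, mem_glueCov.2 ⟨i, C, hC, rfl⟩,
      Or.inl ⟨⟨a, haC, rfl⟩, fun hvC => hv (Set.image_subset_range _ _ hvC)⟩⟩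

end IsExactCliqueCover

theorem isSeparatingColoring_glueColoring {𝒞 : Set (Set T.V)} {g : Fin 3 → Set T.V → ℕ}
    (h : IsExactCliqueCover T 𝒞)
    (hlt : ∀ i, ∀ C ∈ 𝒞, g i C < 3)
    (hsame : ∀ i, ∀ C ∈ 𝒞, ∀ D ∈ 𝒞, C ≠ D → (C ∩ D).Nonempty → g i C ≠ g i D)
    (hacross : ∀ i j, i ≠ j → ∀ C ∈ 𝒞, ∀ D ∈ 𝒞,
      T.contact j ∈ C → T.contact i ∈ D → g i C ≠ g j D)
    (hcontact : ∀ k, ∀ C ∈ 𝒞, T.contact k ∈ C → g k C = k)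
    (hsep : ∀ i a b, a ≠ b → ∃ S ∈ T.glueCov 𝒞,
      (T.incl i a ∈ S ∧ T.incl i b ∉ S) ∨ (T.incl i b ∈ S ∧ T.incl i a ∉ S)) :
    IsSeparatingColoring (glue T) (T.glueCov 𝒞) (T.glueColoring 𝒞 g) := by
  refine ⟨fun S hS => ?_, h.glueColoring_ne hsame hacross, h.glueColoring_contact hcontact,
    h.glueCov_separates hsep⟩
  obtain ⟨i, C, hC, rfl⟩ := mem_glueCov.1 hS
  rw [h.glueColoring_inCopy hC]
  exact hlt i C hC

theorem isSeparatingColoring_glue {𝒞 : Set (Set T.V)} {c : Set T.V → ℕ}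
    (h : IsExactCliqueCover T 𝒞) (hc : IsSeparatingColoring T 𝒞 c) :
    IsSeparatingColoring (glue T) (T.glueCov 𝒞) (T.glueColoring 𝒞 fun _ C => c C) := by
  have hT := h.contact_injective
  refine isSeparatingColoring_glueColoring h (fun _ => hc.color_lt) (fun _ => hc.color_ne) ?_
    hc.color_contact fun i a b hab => ?_
  · intro i j hij C hC D hD hjC hiD
    rw [hc.color_contact j C hC hjC, hc.color_contact i D hD hiD]
    exact fun hji => hij (Fin.val_injective hji).symm
  · obtain ⟨C, hC, hsep⟩ := hc.separates a b hab
    refine ⟨T.inCopy i C, mem_glueCov.2 ⟨i, C, hC, rfl⟩, ?_⟩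
    simpa only [incl_mem_inCopy_self hT] using hsep

theorem isExactCliqueCover_univ (hT : Function.Bijective T.contact) (hG : T.G = ⊤) :
    IsExactCliqueCover T {Set.univ} := by
  have hcliques : ∀ v, cliquesAt {Set.univ} v = {(Set.univ : Set T.V)} := fun v =>
    Set.eq_singleton_iff_unique_mem.2 ⟨⟨rfl, trivial⟩, fun C hC => hC.1⟩
  refine ⟨hT.1, ?_, ?_, ?_, fun k => ?_, fun v hv => absurd (hT.2 v) hv⟩
  · rintro C rfl
    exact isClique_univ.2 hG
  · rintro C rfl
    exact ⟨T.contact 0, trivial, T.contact 1, trivial, hT.1.ne (by decide)⟩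
  · exact fun _ _ _ => ⟨_, rfl, trivial, trivial⟩
  · rw [hcliques, Set.ncard_singleton]

/-- Two vertices of one copy of the triangle are separated by the triangle of another copy. -/
theorem isSeparatingColoring_glue_univ (hT : Function.Bijective T.contact) (hG : T.G = ⊤) :
    IsSeparatingColoring (glue T) (T.glueCov {Set.univ})
      (T.glueColoring {Set.univ} fun i _ => i) := by
  have hmem : ∀ i j a : Fin 3,
      T.incl i (T.contact a) ∈ T.inCopy j Set.univ ↔ j = i ∨ a = j := by
    intro i j a
    rw [incl_mem_inCopy_iff hT.1, hT.1.eq_iff]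
    simp only [Set.mem_univ, and_true]
    tauto
  refine isSeparatingColoring_glueColoring (isExactCliqueCover_univ hT hG)
    (fun i _ _ => i.isLt) (fun _ C hC D hD hCD _ => absurd (hC.trans hD.symm) hCD)
    (fun i j hij _ _ _ _ _ _ hji => hij (Fin.val_injective hji)) (fun _ _ _ _ => rfl) ?_
  intro i a b hab
  obtain ⟨a, rfl⟩ := hT.2 a
  obtain ⟨b, rfl⟩ := hT.2 b
  by_cases hai : a = i
  · subst hai
    refine ⟨_, mem_glueCov.2 ⟨b, _, rfl, rfl⟩, Or.inr ?_⟩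
    rw [hmem, hmem]
    tauto
  · refine ⟨_, mem_glueCov.2 ⟨a, _, rfl, rfl⟩, Or.inl ?_⟩
    rw [hmem, hmem]
    tauto

lemma bijective_contact_SG_one : Function.Bijective (SG 1).contact := by
  have h : (SG 1).contact = (id : Fin 3 → Fin 3) := by
    funext k
    fin_cases k <;> rfl
  exact h ▸ Function.bijective_id

theorem exists_isExactCliqueCover_isSeparatingColoring (n : ℕ) (hn : 2 ≤ n) :
    ∃ (𝒞 : Set (Set (SG n).V)) (c : Set (SG n).V → ℕ),
      IsExactCliqueCover (SG n) 𝒞 ∧ IsSeparatingColoring (SG n) 𝒞 c := by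
  induction n, hn using Nat.le_induction with
  | base =>
    have hT := bijective_contact_SG_one
    exact ⟨_, _, isExactCliqueCover_glue (isExactCliqueCover_univ hT rfl),
      isSeparatingColoring_glue_univ hT rfl⟩
  | succ n hn ih =>
    obtain ⟨𝒞, c, h, hc⟩ := ih
    obtain ⟨m, rfl⟩ : ∃ m, n = m + 1 := ⟨n - 1, by omega⟩
    exact ⟨_, _, isExactCliqueCover_glue h, isSeparatingColoring_glue h hc⟩

end Tetrad

/-- For every `n ≥ 2` the Sierpinski gasket graph `S_n` admits a clique 2-cover, and
a separating equivalent 3-cover in which every non-contact vertex is in exactly two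
cliques, every contact vertex is in exactly one clique, and cliques containing distinct
contact vertices get distinct colors. -/
theorem stmt_13 (n : ℕ) (hn : 2 ≤ n) :
    (∃ 𝒞 : Set (Set (SG n).V), CliqueKCoverS (SG n).G 2 𝒞) ∧
    ∃ (𝒞 : Set (Set (SG n).V)) (c : Set (SG n).V → ℕ),
      SepEqCoverWith (SG n).G 3 𝒞 c ∧
      (∀ v : (SG n).V, v ∉ ({(SG n).x1, (SG n).x2, (SG n).x3} : Set (SG n).V) →
        {C ∈ 𝒞 | v ∈ C}.ncard = 2) ∧
      (∀ v : (SG n).V, v ∈ ({(SG n).x1, (SG n).x2, (SG n).x3} : Set (SG n).V) →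
        {C ∈ 𝒞 | v ∈ C}.ncard = 1) ∧
      (∀ C ∈ 𝒞, ∀ D ∈ 𝒞,
        ∀ y ∈ ({(SG n).x1, (SG n).x2, (SG n).x3} : Set (SG n).V),
        ∀ z ∈ ({(SG n).x1, (SG n).x2, (SG n).x3} : Set (SG n).V),
          y ≠ z → y ∈ C → z ∈ D → c C ≠ c D) := by
  obtain ⟨𝒞, c, h, hc⟩ := Tetrad.exists_isExactCliqueCover_isSeparatingColoring n hn
  rw [← Tetrad.range_contact]
  refine ⟨⟨𝒞, h.isClique, h.covers, fun v => ⟨h.finite_cliquesAt v, h.ncard_cliquesAt_le_two v⟩⟩,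
    𝒞, c, ⟨h.isClique, h.covers, hc.color_lt, hc.color_ne, hc.separates⟩,
    h.ncard_of_not_mem, ?_, ?_⟩
  · rintro _ ⟨k, rfl⟩
    exact h.ncard_contact k
  · rintro C hC D hD _ ⟨k, rfl⟩ _ ⟨l, rfl⟩ hkl hkC hlD
    rw [hc.color_contact k C hC hkC, hc.color_contact l D hD hlD]
    exact fun h => hkl (congrArg _ (Fin.val_injective h))
end
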